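/- arXiv:2309.02350 — 5 statements merged into one kernel-verified Lean document; each statement's English description precedes it below -/
import Mathlib

section
/- If f : X → Y is an η-quasisymmetric homeomorphism and A, B ⊆ X have positive finite diameters, then Δ(f(A),f(B)) ≥ 1/(2·η(Δ(A,B)^{-1})), where Δ denotes relative distance. -/
/-- `f` is `η`-quasisymmetric. -/
def IsQuasisymmetric {X Y : Type*} [MetricSpace X] [MetricSpace Y]
    (η : ℝ → ℝ) (f : X → Y) : Prop :=
  ∀ x y z : X, x ≠ z → dist (f x) (f y) / dist (f x) (f z) ≤ η (dist x y / dist x z)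

/-- The distance between two subsets of a metric space. -/
noncomputable def setDist {X : Type*} [MetricSpace X] (E F : Set X) : ℝ :=
  sInf (Set.image2 dist E F)

/-- The relative distance `Δ(E,F) = dist(E,F) / min(diam E, diam F)`. -/
noncomputable def relDist {X : Type*} [MetricSpace X] (E F : Set X) : ℝ :=
  setDist E F / min (Metric.diam E) (Metric.diam F)

lemma setDist_comm' {X : Type*} [MetricSpace X] (E F : Set X) :
    setDist E F = setDist F E := by
  unfold setDist
  congr 1
  ext r
  constructor
  · rintro ⟨x, hx, y, hy, rfl⟩; exact ⟨y, hy, x, hx, dist_comm y x⟩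
  · rintro ⟨x, hx, y, hy, rfl⟩; exact ⟨y, hy, x, hx, dist_comm y x⟩

lemma relDist_comm' {X : Type*} [MetricSpace X] (E F : Set X) :
    relDist E F = relDist F E := by
  unfold relDist; rw [setDist_comm', min_comm]

lemma setDist_nonneg' {X : Type*} [MetricSpace X] (E F : Set X) : 0 ≤ setDist E F := by
  apply Real.sInf_nonneg
  rintro r ⟨x, hx, y, hy, rfl⟩; exact dist_nonneg

lemma relDist_nonneg' {X : Type*} [MetricSpace X] (E F : Set X) : 0 ≤ relDist E F :=
  div_nonneg (setDist_nonneg' E F) (le_min Metric.diam_nonneg Metric.diam_nonneg)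

lemma setDist_le_dist' {X : Type*} [MetricSpace X] {E F : Set X} {a b : X}
    (ha : a ∈ E) (hb : b ∈ F) : setDist E F ≤ dist a b :=
  csInf_le ⟨0, by rintro r ⟨x, hx, y, hy, rfl⟩; exact dist_nonneg⟩ ⟨a, ha, b, hb, rfl⟩

lemma exists_pair_of_diam_pos {X : Type*} [MetricSpace X] {A : Set X}
    (hA : 0 < Metric.diam A) : ∃ a ∈ A, ∃ z ∈ A, a ≠ z := by
  by_contra h
  push_neg at h
  have : A.Subsingleton := fun a ha z hz => by
    by_contra hne; exact hne (h a ha z hz)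
  exact absurd (Metric.diam_subsingleton this) (by linarith)

lemma eta_nonneg {η : ℝ → ℝ} (hη0 : η 0 = 0) (hηmono : StrictMonoOn η (Set.Ici 0))
    {r : ℝ} (hr : 0 ≤ r) : 0 ≤ η r := by
  rcases eq_or_lt_of_le hr with rfl | hr'
  · exact hη0.ge
  · have := hηmono (Set.self_mem_Ici) (Set.mem_Ici.2 hr) hr'
    linarith [hη0]

lemma qs_image_bounded {X Y : Type*} [MetricSpace X] [MetricSpace Y]
    {η : ℝ → ℝ} (hη0 : η 0 = 0) (hηmono : StrictMonoOn η (Set.Ici 0))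
    {f : X → Y} (hinj : Function.Injective f) (hqs : IsQuasisymmetric η f)
    {A : Set X} (hA : 0 < Metric.diam A) (hA' : Bornology.IsBounded A) :
    Bornology.IsBounded (f '' A) := by
  obtain ⟨a, ha, z, hz, haz⟩ := exists_pair_of_diam_pos hA
  have hdaz : 0 < dist a z := dist_pos.2 haz
  apply Bornology.IsBounded.subset
    (Metric.isBounded_closedBall (x := f a)
      (r := η (Metric.diam A / dist a z) * dist (f a) (f z)))
  rintro _ ⟨x, hx, rfl⟩
  rw [Metric.mem_closedBall, dist_comm]
  have h1 := hqs a x z haz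
  have hfaz : 0 < dist (f a) (f z) := dist_pos.2 fun h => haz (hinj h)
  rw [div_le_iff₀ hfaz] at h1
  refine h1.trans ?_
  apply mul_le_mul_of_nonneg_right _ dist_nonneg
  apply hηmono.monotoneOn (Set.mem_Ici.2 (by positivity)) (Set.mem_Ici.2 (by positivity))
  exact div_le_div_of_nonneg_right (Metric.dist_le_diam_of_mem hA' ha hx) hdaz.le

lemma key_lemma {X Y : Type*} [MetricSpace X] [MetricSpace Y]
    (η : ℝ → ℝ) (hη0 : η 0 = 0) (hηmono : StrictMonoOn η (Set.Ici 0))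
    (f : X → Y) (hf : IsHomeomorph f) (hqs : IsQuasisymmetric η f)
    (A B : Set X) (hA : 0 < Metric.diam A) (hA' : Bornology.IsBounded A)
    (hB : 0 < Metric.diam B) (hB' : Bornology.IsBounded B)
    (hAB : Metric.diam A ≤ Metric.diam B) :
    1 / (2 * η (relDist A B)⁻¹) ≤ relDist (f '' A) (f '' B) := by
  have hinj : Function.Injective f := hf.injective
  have hAne : A.Nonempty := by
    obtain ⟨a, ha, _⟩ := exists_pair_of_diam_pos hA; exact ⟨a, ha⟩
  have hBne : B.Nonempty := by
    obtain ⟨b, hb, _⟩ := exists_pair_of_diam_pos hB; exact ⟨b, hb⟩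
  -- Case on whether setDist A B = 0
  rcases eq_or_lt_of_le (setDist_nonneg' A B) with hd0 | hd
  · -- degenerate case: relDist A B = 0, LHS = 0
    have : relDist A B = 0 := by unfold relDist; rw [← hd0]; simp
    rw [this]
    simp only [inv_zero, hη0, mul_zero, div_zero]
    exact relDist_nonneg' _ _
  · set d := setDist A B with hdd
    set t := Metric.diam A / d with htdef
    have ht0 : 0 < t := div_pos hA hd
    have hηt : 0 < η t := by
      have := hηmono Set.self_mem_Ici (Set.mem_Ici.2 ht0.le) ht0
      linarith [hη0]
    have hmin : min (Metric.diam A) (Metric.diam B) = Metric.diam A := min_eq_left hAB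
    have hrel : (relDist A B)⁻¹ = t := by
      unfold relDist; rw [hmin, inv_div]
    rw [hrel]
    -- image sets bounded and with positive diameter
    have hfA' : Bornology.IsBounded (f '' A) := qs_image_bounded hη0 hηmono hinj hqs hA hA'
    have hfB' : Bornology.IsBounded (f '' B) := qs_image_bounded hη0 hηmono hinj hqs hB hB'
    have hfA : 0 < Metric.diam (f '' A) := by
      obtain ⟨a, ha, z, hz, haz⟩ := exists_pair_of_diam_pos hA
      have : 0 < dist (f a) (f z) := dist_pos.2 fun h => haz (hinj h)
      exact this.trans_le (Metric.dist_le_diam_of_mem hfA' ⟨a, ha, rfl⟩ ⟨z, hz, rfl⟩)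
    have hfB : 0 < Metric.diam (f '' B) := by
      obtain ⟨b, hb, z, hz, hbz⟩ := exists_pair_of_diam_pos hB
      have : 0 < dist (f b) (f z) := dist_pos.2 fun h => hbz (hinj h)
      exact this.trans_le (Metric.dist_le_diam_of_mem hfB' ⟨b, hb, rfl⟩ ⟨z, hz, rfl⟩)
    set D' := setDist (f '' A) (f '' B) with hD'def
    have hD'0 : 0 ≤ D' := setDist_nonneg' _ _
    -- main estimate: diam (f '' A) ≤ 2 * η t * D'
    have hbound : Metric.diam (f '' A) ≤ 2 * (η t * D') := by
      apply le_of_forall_pos_le_add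
      intro ε hε
      have hε' : 0 < ε / (2 * η t) := by positivity
      obtain ⟨r, hr, hrlt⟩ := Real.lt_sInf_add_pos
        (s := Set.image2 dist (f '' A) (f '' B))
        (Set.Nonempty.image2 (hAne.image f) (hBne.image f)) hε'
      obtain ⟨fa, ⟨a, ha, rfl⟩, fb, ⟨b, hb, rfl⟩, rfl⟩ := hr
      have hdab : d ≤ dist a b := setDist_le_dist' ha hb
      have hab : a ≠ b := by
        intro h; rw [h, dist_self] at hdab; linarith
      have hfab : dist (f a) (f b) ≤ D' + ε / (2 * η t) := le_of_lt hrlt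
      have hstep : ∀ x ∈ A, dist (f a) (f x) ≤ η t * (D' + ε / (2 * η t)) := by
        intro x hx
        have h1 := hqs a x b hab
        have hfab0 : 0 < dist (f a) (f b) := dist_pos.2 fun h => hab (hinj h)
        rw [div_le_iff₀ hfab0] at h1
        refine h1.trans ?_
        apply mul_le_mul _ hfab dist_nonneg (eta_nonneg hη0 hηmono ht0.le)
        apply hηmono.monotoneOn (Set.mem_Ici.2 (by positivity)) (Set.mem_Ici.2 ht0.le)
        exact div_le_div₀ Metric.diam_nonneg (Metric.dist_le_diam_of_mem hA' ha hx) hd hdab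
      have hdiam : Metric.diam (f '' A) ≤ 2 * (η t * (D' + ε / (2 * η t))) := by
        apply Metric.diam_le_of_forall_dist_le (by positivity)
        rintro _ ⟨x, hx, rfl⟩ _ ⟨y, hy, rfl⟩
        calc dist (f x) (f y) ≤ dist (f a) (f x) + dist (f a) (f y) := dist_triangle_left _ _ _
          _ ≤ η t * (D' + ε / (2 * η t)) + η t * (D' + ε / (2 * η t)) :=
              add_le_add (hstep x hx) (hstep y hy)
          _ = 2 * (η t * (D' + ε / (2 * η t))) := by ring
      refine hdiam.trans (le_of_eq ?_)
      field_simp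
    -- conclude
    have hD' : 0 < D' := by
      rcases eq_or_lt_of_le hD'0 with h | h
      · exfalso; rw [← h, mul_zero, mul_zero] at hbound; linarith
      · exact h
    have hminf : 0 < min (Metric.diam (f '' A)) (Metric.diam (f '' B)) := lt_min hfA hfB
    unfold relDist
    rw [← hD'def]
    have h1 : min (Metric.diam (f '' A)) (Metric.diam (f '' B)) ≤ 2 * η t * D' :=
      (min_le_left _ _).trans (by linarith [hbound])
    calc 1 / (2 * η t) = D' / (2 * η t * D') := by
          field_simp
      _ ≤ D' / min (Metric.diam (f '' A)) (Metric.diam (f '' B)) :=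
          div_le_div_of_nonneg_left hD'0 hminf h1

theorem stmt3 {X Y : Type*} [MetricSpace X] [MetricSpace Y]
    (η : ℝ → ℝ) (hη0 : η 0 = 0) (hηmono : StrictMonoOn η (Set.Ici 0))
    (f : X → Y) (hf : IsHomeomorph f) (hqs : IsQuasisymmetric η f)
    (A B : Set X) (hA : 0 < Metric.diam A) (hA' : Bornology.IsBounded A)
    (hB : 0 < Metric.diam B) (hB' : Bornology.IsBounded B) :
    1 / (2 * η (relDist A B)⁻¹) ≤ relDist (f '' A) (f '' B) := by
  rcases le_total (Metric.diam A) (Metric.diam B) with h | h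
  · exact key_lemma η hη0 hηmono f hf hqs A B hA hA' hB hB' h
  · rw [relDist_comm' A B, relDist_comm' (f '' A) (f '' B)]
    exact key_lemma η hη0 hηmono f hf hqs B A hB hB' hA hA' h
end

section
/- Let E ⊆ [0,1] be a Cantor set obtained by the following iterated construction with parameters integers m > k ≥ 1: [0,1] is divided into m equal closed intervals and k of them are kept, and this is repeated inside each retained interval ad infinitum (the choice of retained intervals may vary). Then dim_H(E) ≥ log k / log m. -/
/-!
Pushing the uniform product measure on `ℕ → Fin k` forward along the coding of the Cantor set by
its choices of retained digits gives a probability measure on `E` with mass `k⁻¹ ^ N` on each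
retained interval of generation `N`. A closed ball of radius `m⁻¹ ^ N` meets at most four
intervals of generation `N`, so its mass is at most `4 k⁻¹ ^ N = 4 (m⁻¹ ^ N) ^ (log k / log m)`,
and the mass distribution principle concludes.
-/

open MeasureTheory Metric Finset Filter Topology

section MassDistribution

theorem measure_closedBall_le_of_forall_pow {X : Type*} [PseudoMetricSpace X] [MeasurableSpace X]
    (μ : Measure X) {C : ENNReal} {r α : ℝ} (hr₀ : 0 < r) (hr₁ : r < 1) (hα : 0 ≤ α)
    (h : ∀ x (N : ℕ), μ (closedBall x (r ^ N)) ≤ C * ENNReal.ofReal ((r ^ N) ^ α))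
    (x : X) {ρ : ℝ} (hρ₀ : 0 < ρ) (hρ₁ : ρ ≤ 1) :
    μ (closedBall x ρ) ≤ C * ENNReal.ofReal (r ^ (-α)) * ENNReal.ofReal (ρ ^ α) := by
  obtain ⟨N, hlt, hle⟩ := exists_nat_pow_near_of_lt_one hρ₀ hρ₁ hr₀ hr₁
  have hscale : (r ^ N) ^ α ≤ r ^ (-α) * ρ ^ α := by
    calc (r ^ N) ^ α = r ^ (-α) * (r ^ (N + 1)) ^ α := by
          rw [pow_succ, Real.mul_rpow (by positivity) hr₀.le, Real.rpow_neg hr₀.le]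
          field_simp
      _ ≤ r ^ (-α) * ρ ^ α := by gcongr
  calc μ (closedBall x ρ) ≤ μ (closedBall x (r ^ N)) :=
        measure_mono (closedBall_subset_closedBall hle)
    _ ≤ C * ENNReal.ofReal ((r ^ N) ^ α) := h x N
    _ ≤ C * ENNReal.ofReal (r ^ (-α) * ρ ^ α) := by gcongr
    _ = C * ENNReal.ofReal (r ^ (-α)) * ENNReal.ofReal (ρ ^ α) := by
        rw [ENNReal.ofReal_mul (by positivity), mul_assoc]

variable {X : Type*} [MetricSpace X] [MeasurableSpace X]

theorem measure_le_mul_ediam_rpow {μ : Measure X} {C : ENNReal} (hC : C ≠ ⊤) {ρ₀ α : ℝ}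
    (hρ₀ : 0 < ρ₀) (hα : 0 < α)
    (h : ∀ x ρ, 0 < ρ → ρ ≤ ρ₀ → μ (closedBall x ρ) ≤ C * ENNReal.ofReal (ρ ^ α))
    {s : Set X} (hs : ediam s ≤ ENNReal.ofReal ρ₀) : μ s ≤ C * ediam s ^ α := by
  rcases s.eq_empty_or_nonempty with rfl | ⟨x, hx⟩
  · simp
  rcases eq_or_ne (ediam s) 0 with h0 | h0
  · have hsub (ρ : ℝ) (hρ : 0 < ρ) : s ⊆ closedBall x ρ := fun y hy => by
      rw [ediam_eq_zero_iff.mp h0 hy hx]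
      exact mem_closedBall_self hρ.le
    have hlim : Tendsto (fun ρ : ℝ => C * ENNReal.ofReal (ρ ^ α)) (𝓝[>] 0) (𝓝 0) := by
      have hpow : Tendsto (fun ρ : ℝ => ρ ^ α) (𝓝[>] 0) (𝓝 0) := by
        have := (Real.continuousAt_rpow_const 0 α (Or.inr hα.le)).tendsto
        rw [Real.zero_rpow hα.ne'] at this
        exact this.mono_left nhdsWithin_le_nhds
      simpa using ENNReal.Tendsto.const_mul (ENNReal.tendsto_ofReal hpow) (Or.inr hC)
    rw [h0, ENNReal.zero_rpow_of_pos hα, mul_zero]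
    refine ge_of_tendsto hlim ?_
    filter_upwards [Ioc_mem_nhdsGT hρ₀] with ρ hρ
    exact (measure_mono (hsub ρ hρ.1)).trans (h x ρ hρ.1 hρ.2)
  · have hfin : ediam s ≠ ⊤ := ne_top_of_le_ne_top ENNReal.ofReal_ne_top hs
    have hδ : 0 < diam s := ENNReal.toReal_pos h0 hfin
    have hsub : s ⊆ closedBall x (diam s) := fun y hy =>
      dist_le_diam_of_mem (isBounded_iff_ediam_ne_top.mpr hfin) hy hx
    calc μ s ≤ μ (closedBall x (diam s)) := measure_mono hsub
      _ ≤ C * ENNReal.ofReal (diam s ^ α) := h x _ hδ (ENNReal.toReal_le_of_le_ofReal hρ₀.le hs)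
      _ = C * ediam s ^ α := by
        rw [← ENNReal.ofReal_rpow_of_nonneg hδ.le hα.le, diam, ENNReal.ofReal_toReal hfin]

variable [BorelSpace X]

theorem le_dimH_of_forall_measure_closedBall_le (μ : Measure X) {E : Set X} (hE : μ E ≠ 0)
    {C : ENNReal} (hC : C ≠ ⊤) {ρ₀ α : ℝ} (hρ₀ : 0 < ρ₀)
    (h : ∀ x ρ, 0 < ρ → ρ ≤ ρ₀ → μ (closedBall x ρ) ≤ C * ENNReal.ofReal (ρ ^ α)) :
    ENNReal.ofReal α ≤ dimH E := by
  rcases le_or_gt α 0 with hα | hα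
  · simp [ENNReal.ofReal_of_nonpos hα]
  have hμ : C⁻¹ • μ ≤ μH[α] := by
    refine Measure.le_hausdorffMeasure α _ (ENNReal.ofReal ρ₀) (ENNReal.ofReal_pos.mpr hρ₀)
      fun s hs => ?_
    calc (C⁻¹ • μ) s = C⁻¹ * μ s := rfl
      _ ≤ C⁻¹ * (C * ediam s ^ α) := by gcongr; exact measure_le_mul_ediam_rpow hC hρ₀ hα h hs
      _ = C⁻¹ * C * ediam s ^ α := (mul_assoc _ _ _).symm
      _ ≤ ediam s ^ α := mul_le_of_le_one_left bot_le (ENNReal.inv_mul_le_one C)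
  have hE' : μH[α] E ≠ 0 := by
    refine (lt_of_lt_of_le ?_ (hμ E)).ne'
    exact ENNReal.mul_pos (ENNReal.inv_ne_zero.mpr hC) hE
  rw [← Real.coe_toNNReal α hα.le] at hE'
  exact le_dimH_of_hausdorffMeasure_ne_zero hE'

end MassDistribution

section Digits

variable {b : ℕ}

def ofDigitsPrefix (d : ℕ → Fin b) : ℕ → ℕ
  | 0 => 0
  | n + 1 => b * ofDigitsPrefix d n + d n

theorem eq_of_ofDigitsPrefix_eq {d d' : ℕ → Fin b} :
    ∀ {N}, ofDigitsPrefix d N = ofDigitsPrefix d' N → ∀ i < N, d i = d' i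
  | 0, _, _, hi => absurd hi (Nat.not_lt_zero _)
  | N + 1, h, i, hi => by
    have hb : 0 < b := Fin.pos (d 0)
    have hlast : (d N : ℕ) = d' N := by
      simpa [ofDigitsPrefix, Nat.mod_eq_of_lt (d N).isLt, Nat.mod_eq_of_lt (d' N).isLt]
        using congrArg (· % b) h
    have hinit : ofDigitsPrefix d N = ofDigitsPrefix d' N := by
      simp only [ofDigitsPrefix, hlast] at h
      exact Nat.eq_of_mul_eq_mul_left hb (Nat.add_right_cancel h)
    rcases Nat.lt_succ_iff_lt_or_eq.mp hi with hi | rfl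
    · exact eq_of_ofDigitsPrefix_eq hinit i hi
    · exact Fin.ext hlast

theorem cast_ofDigitsPrefix (d : ℕ → Fin b) (N : ℕ) :
    (ofDigitsPrefix d N : ℝ) = b ^ N * ∑ i ∈ range N, Real.ofDigitsTerm d i := by
  have hb : (b : ℝ) ≠ 0 := Nat.cast_ne_zero.mpr (Fin.pos (d 0)).ne'
  induction N with
  | zero => simp [ofDigitsPrefix]
  | succ N ih =>
    rw [ofDigitsPrefix, sum_range_succ, Real.ofDigitsTerm]
    push_cast
    rw [ih]
    field_simp
    ring

theorem pow_mul_ofDigits_mem_Icc (d : ℕ → Fin b) (N : ℕ) :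
    (b : ℝ) ^ N * Real.ofDigits d ∈ Set.Icc (ofDigitsPrefix d N : ℝ) (ofDigitsPrefix d N + 1) := by
  have hb : (b : ℝ) ^ N ≠ 0 := pow_ne_zero N (Nat.cast_ne_zero.mpr (Fin.pos (d 0)).ne')
  rw [Real.ofDigits_eq_sum_add_ofDigits d N, mul_add, ← mul_assoc, mul_inv_cancel₀ hb, one_mul,
    ← cast_ofDigitsPrefix]
  exact ⟨le_add_of_nonneg_right (Real.ofDigits_nonneg _),
    (add_le_add_iff_left _).mpr (Real.ofDigits_le_one _)⟩

theorem ofDigitsPrefix_mem_Icc_of_abs_sub_le {d : ℕ → Fin b} {N : ℕ} {y : ℝ}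
    (h : |Real.ofDigits d - y| ≤ ((b : ℝ) ^ N)⁻¹) :
    (ofDigitsPrefix d N : ℤ) ∈ Icc (⌊(b : ℝ) ^ N * y⌋ - 2) (⌊(b : ℝ) ^ N * y⌋ + 1) := by
  have hb : (0 : ℝ) < b ^ N := pow_pos (Nat.cast_pos.mpr (Fin.pos (d 0))) N
  have hdist : |(b : ℝ) ^ N * Real.ofDigits d - b ^ N * y| ≤ 1 := by
    rwa [← mul_sub, abs_mul, abs_of_pos hb, ← le_div_iff₀' hb, one_div]
  obtain ⟨hlo, hhi⟩ := pow_mul_ofDigits_mem_Icc d N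
  obtain ⟨h₁, h₂⟩ := abs_le.mp hdist
  have hfl := Int.floor_le ((b : ℝ) ^ N * y)
  have hfl' := Int.lt_floor_add_one ((b : ℝ) ^ N * y)
  have hlower : ⌊(b : ℝ) ^ N * y⌋ - 2 < (ofDigitsPrefix d N : ℤ) + 1 := by
    rw [← Int.cast_lt (R := ℝ)]; push_cast; linarith
  have hupper : (ofDigitsPrefix d N : ℤ) < ⌊(b : ℝ) ^ N * y⌋ + 2 := by
    rw [← Int.cast_lt (R := ℝ)]; push_cast; linarith
  rw [mem_Icc]
  omega

end Digits

section TreeDigits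

variable {m k : ℕ} (T : List (Fin m) → Finset (Fin m)) (hT : ∀ w, (T w).card = k)

def retainedDigit (w : List (Fin m)) : Fin k ↪o Fin m :=
  (T w).orderEmbOfFin (hT w)

-- `e n` picks which of the `k` digits retained below the first `n` digits comes next.
def treeDigits (e : ℕ → Fin k) (n : ℕ) : Fin m :=
  retainedDigit T hT (List.ofFn fun i : Fin n => treeDigits e i) (e n)

theorem treeDigits_mem (e : ℕ → Fin k) (n : ℕ) :
    treeDigits T hT e n ∈ T (List.ofFn fun i : Fin n => treeDigits T hT e i) := by
  rw [treeDigits]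
  exact Finset.orderEmbOfFin_mem _ _ _

theorem eq_of_treeDigits_eq {e e' : ℕ → Fin k} {N : ℕ}
    (h : ∀ i < N, treeDigits T hT e i = treeDigits T hT e' i) : ∀ i < N, e i = e' i := by
  intro i hi
  have hword : (List.ofFn fun j : Fin i => treeDigits T hT e j) =
      List.ofFn fun j : Fin i => treeDigits T hT e' j :=
    congrArg List.ofFn (funext fun j => h j (j.isLt.trans hi))
  have hi := h i hi
  rw [treeDigits, treeDigits, hword] at hi
  exact (retainedDigit T hT _).injective hi

theorem measurable_treeDigits : Measurable (treeDigits T hT) := by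
  refine measurable_pi_lambda _ fun n => ?_
  induction n using Nat.strong_induction_on with
  | _ n ih =>
    have hprefix : Measurable fun e : ℕ → Fin k => ((fun i : Fin n => treeDigits T hT e i), e n) :=
      (measurable_pi_lambda _ fun i : Fin n => ih i i.isLt).prodMk (measurable_pi_apply n)
    have hselect : Measurable fun p : (Fin n → Fin m) × Fin k =>
        retainedDigit T hT (List.ofFn p.1) p.2 := .of_discrete
    convert hselect.comp hprefix using 1
    funext e
    rw [treeDigits]
    rfl

theorem measurable_ofDigits_treeDigits :
    Measurable fun e => Real.ofDigits (treeDigits T hT e) :=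
  Real.continuous_ofDigits.measurable.comp (measurable_treeDigits T hT)

end TreeDigits

section CantorMeasure

variable {k : ℕ} [NeZero k]

noncomputable def uniformSeq (k : ℕ) [NeZero k] : Measure (ℕ → Fin k) :=
  Measure.infinitePi fun _ => (PMF.uniformOfFintype (Fin k)).toMeasure

instance : IsProbabilityMeasure (uniformSeq k) := by
  unfold uniformSeq; infer_instance

theorem uniformSeq_le_of_eqOn_range {S : Set (ℕ → Fin k)} {N : ℕ}
    (hS : ∀ e ∈ S, ∀ e' ∈ S, ∀ i < N, e i = e' i) :
    uniformSeq k S ≤ (k : ENNReal)⁻¹ ^ N := by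
  rcases S.eq_empty_or_nonempty with rfl | ⟨e₀, he₀⟩
  · simp
  have hcyl : S ⊆ Set.pi (range N : Finset ℕ) fun i => {e₀ i} := fun e he i hi =>
    hS e he e₀ he₀ i (mem_range.mp hi)
  calc uniformSeq k S ≤ uniformSeq k (Set.pi (range N : Finset ℕ) fun i => {e₀ i}) :=
        measure_mono hcyl
    _ = (k : ENNReal)⁻¹ ^ N := by
        rw [uniformSeq, Measure.infinitePi_pi _ fun _ _ => MeasurableSet.singleton _]
        simp [PMF.uniformOfFintype_apply]

variable {m : ℕ} (T : List (Fin m) → Finset (Fin m)) (hT : ∀ w, (T w).card = k)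

noncomputable def cantorMeasure : Measure ℝ :=
  (uniformSeq k).map fun e => Real.ofDigits (treeDigits T hT e)

theorem cantorMeasure_ne_zero {s : Set ℝ} (hs : ∀ e, Real.ofDigits (treeDigits T hT e) ∈ s) :
    cantorMeasure T hT s ≠ 0 := by
  have hpre : (fun e => Real.ofDigits (treeDigits T hT e)) ⁻¹' s = Set.univ :=
    Set.eq_univ_of_forall hs
  have := Measure.le_map_apply (μ := uniformSeq k)
    (measurable_ofDigits_treeDigits T hT).aemeasurable s
  rw [hpre, measure_univ] at this
  exact (zero_lt_one.trans_le this).ne'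

theorem cantorMeasure_closedBall_le (y : ℝ) (N : ℕ) :
    cantorMeasure T hT (closedBall y ((m : ℝ)⁻¹ ^ N)) ≤ 4 * (k : ENNReal)⁻¹ ^ N := by
  set c := ⌊(m : ℝ) ^ N * y⌋
  set level := fun n : ℤ => {e : ℕ → Fin k | (ofDigitsPrefix (treeDigits T hT e) N : ℤ) = n}
  have hcover : (fun e => Real.ofDigits (treeDigits T hT e)) ⁻¹' closedBall y ((m : ℝ)⁻¹ ^ N) ⊆
      ⋃ n ∈ Icc (c - 2) (c + 1), level n := by
    intro e he
    rw [Set.mem_preimage, mem_closedBall, Real.dist_eq, inv_pow] at he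
    exact Set.mem_biUnion (ofDigitsPrefix_mem_Icc_of_abs_sub_le he) rfl
  have hlevel (n : ℤ) : uniformSeq k (level n) ≤ (k : ENNReal)⁻¹ ^ N :=
    uniformSeq_le_of_eqOn_range fun e he e' he' =>
      eq_of_treeDigits_eq T hT (eq_of_ofDigitsPrefix_eq (Nat.cast_injective (he.trans he'.symm)))
  calc cantorMeasure T hT (closedBall y ((m : ℝ)⁻¹ ^ N))
      ≤ uniformSeq k (⋃ n ∈ Icc (c - 2) (c + 1), level n) := by
        rw [cantorMeasure, Measure.map_apply (measurable_ofDigits_treeDigits T hT)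
          measurableSet_closedBall]
        exact measure_mono hcover
    _ ≤ ∑ n ∈ Icc (c - 2) (c + 1), uniformSeq k (level n) := measure_biUnion_finset_le _ _
    _ ≤ ∑ _n ∈ Icc (c - 2) (c + 1), (k : ENNReal)⁻¹ ^ N := sum_le_sum fun n _ => hlevel n
    _ = 4 * (k : ENNReal)⁻¹ ^ N := by
        rw [sum_const, Int.card_Icc, nsmul_eq_mul]
        congr
        rw [show c + 1 + 1 - (c - 2) = 4 by ring]
        rfl

end CantorMeasure

theorem ofReal_inv_pow_rpow_logb {m k : ℕ} (hm : 1 < m) (hk : 0 < k) (N : ℕ) :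
    ENNReal.ofReal (((m : ℝ)⁻¹ ^ N) ^ Real.logb m k) = (k : ENNReal)⁻¹ ^ N := by
  have hm' : (1 : ℝ) < m := by exact_mod_cast hm
  have hk' : (0 : ℝ) < k := by exact_mod_cast hk
  rw [← Real.rpow_natCast, ← Real.rpow_mul (by positivity), mul_comm, Real.rpow_mul (by positivity),
    Real.inv_rpow (by positivity), Real.rpow_logb (by positivity) hm'.ne' hk', Real.rpow_natCast,
    ENNReal.ofReal_pow (by positivity), ENNReal.ofReal_inv_of_pos hk', ENNReal.ofReal_natCast]

/-- A Cantor set in `[0,1]` obtained by repeatedly dividing into `m` equal intervals and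
keeping `k` of them (the selection `T` may depend on the position, i.e. on the digits chosen
so far) has Hausdorff dimension at least `log k / log m`. -/
theorem stmt11 (m k : ℕ) (hk : 1 ≤ k) (hkm : k < m)
    (T : List (Fin m) → Finset (Fin m)) (hT : ∀ w, (T w).card = k)
    (E : Set ℝ)
    (hE : E = { x : ℝ | ∃ d : ℕ → Fin m,
        (∀ n : ℕ, d n ∈ T (List.ofFn (fun i : Fin n => d i))) ∧
        x = ∑' n : ℕ, (d n : ℝ) / m ^ (n + 1) }) :
    ENNReal.ofReal (Real.log k / Real.log m) ≤ dimH E := by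
  have : NeZero k := ⟨by omega⟩
  have hm : (1 : ℝ) < m := by exact_mod_cast hk.trans_lt hkm
  have hα : 0 ≤ Real.logb m k := Real.logb_nonneg hm (by exact_mod_cast hk)
  have hmem (e : ℕ → Fin k) : Real.ofDigits (treeDigits T hT e) ∈ E := by
    rw [hE]
    exact ⟨_, treeDigits_mem T hT e,
      by simp only [Real.ofDigits, Real.ofDigitsTerm, div_eq_mul_inv]⟩
  rw [Real.log_div_log]
  refine le_dimH_of_forall_measure_closedBall_le (cantorMeasure T hT)
    (C := 4 * ENNReal.ofReal ((m : ℝ)⁻¹ ^ (-Real.logb m k))) (cantorMeasure_ne_zero T hT hmem)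
    (by finiteness) one_pos fun x ρ hρ₀ hρ₁ => ?_
  refine measure_closedBall_le_of_forall_pow _ (by positivity) (inv_lt_one_of_one_lt₀ hm) hα
    (fun y N => ?_) x hρ₀ hρ₁
  rw [ofReal_inv_pow_rpow_logb (hk.trans_lt hkm) hk]
  exact cantorMeasure_closedBall_le T hT y N
end

section
/- Let 1 < ℓ < m and 1 ≤ k < m be integers and K a Bedford-McMullen set with uniform fibers (k rectangles retained per row at every stage). Then the upper Minkowski dimension of K is at most 1 + log k / log m. -/
/-- The Bedford-McMullen set determined by the sequence of patterns `D`. -/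
noncomputable def BMset (m l : ℕ) (D : ℕ → Finset (Fin m × Fin l)) : Set (ℝ × ℝ) :=
  { p | ∃ ω : ℕ → Fin m × Fin l, (∀ n, ω n ∈ D n) ∧
      p.1 = ∑' n : ℕ, ((ω n).1 : ℝ) / m ^ (n + 1) ∧
      p.2 = ∑' n : ℕ, ((ω n).2 : ℝ) / l ^ (n + 1) }

/-- The patterns have uniform fibers: each row contains exactly `k` elements. -/
def UniformFibers {m l : ℕ} (k : ℕ) (D : ℕ → Finset (Fin m × Fin l)) : Prop :=
  ∀ n, ∀ r : Fin l, ((D n).filter (fun q => q.2 = r)).card = k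

/-- The minimal number of `ε`-balls needed to cover `s`, as a real number. -/
noncomputable def coverCount {X : Type*} [MetricSpace X] (s : Set X) (ε : ℝ) : ℝ :=
  sInf ((fun t : Finset X => (t.card : ℝ)) '' { t | s ⊆ ⋃ x ∈ t, Metric.ball x ε })

/-- The upper Minkowski (box-counting) dimension of `s`. -/
noncomputable def upperMinkDim {X : Type*} [MetricSpace X] (s : Set X) : ℝ :=
  Filter.limsup (fun ε : ℝ => Real.log (coverCount s ε) / Real.log (1 / ε))
    (nhdsWithin 0 (Set.Ioi 0))


/-! At scale `ε` take `n`, `p` minimal with `m⁻ⁿ < ε` and `l⁻ᵖ < ε` (so `n ≤ p`).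
Points of the set whose codings share the first `n` digit pairs and the first `p` row digits
are `ε`-close, and since every row of every pattern holds exactly `k` digits there are only
`lᵖ kⁿ` such prefixes. Hence
`log N(ε) ≤ n log k + p log l ≤ (1 + log k / log m) log (1/ε) + O(1)`.
-/

open Real Filter Topology Metric

section CoverCount

variable {X : Type*} [MetricSpace X] {s : Set X} {ε : ℝ}

lemma coverCount_le_card {t : Finset X} (ht : s ⊆ ⋃ x ∈ t, ball x ε) :
    coverCount s ε ≤ t.card :=
  csInf_le ⟨0, by rintro _ ⟨u, -, rfl⟩; positivity⟩ ⟨t, ht, rfl⟩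

lemma one_le_coverCount (hs : s.Nonempty) {t : Finset X} (ht : s ⊆ ⋃ x ∈ t, ball x ε) :
    1 ≤ coverCount s ε := by
  refine le_csInf ⟨_, t, ht, rfl⟩ ?_
  rintro _ ⟨u, hu, rfl⟩
  obtain ⟨z, hz⟩ := hs
  obtain ⟨x, hx, -⟩ := Set.mem_iUnion₂.mp (hu hz)
  exact Nat.one_le_cast.mpr (Finset.card_pos.mpr ⟨x, hx⟩)

lemma exists_finset_cover_range {ι κ : Type*} (x : ι → X) (g : ι → κ) (T : Finset κ)
    (hg : ∀ i, g i ∈ T) (hx : ∀ i j, g i = g j → dist (x i) (x j) < ε) :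
    ∃ t : Finset X, t.card ≤ T.card ∧ Set.range x ⊆ ⋃ y ∈ t, ball y ε := by
  classical
  rcases isEmpty_or_nonempty ι with hι | hι
  · exact ⟨∅, by simp, by simp [Set.range_eq_empty]⟩
  refine ⟨T.image (x ∘ Function.invFun g), Finset.card_image_le, ?_⟩
  rintro _ ⟨i, rfl⟩
  refine Set.mem_iUnion₂.mpr ⟨_, Finset.mem_image_of_mem _ (hg i), ?_⟩
  exact mem_ball.mpr (hx _ _ (Function.invFun_eq ⟨i, rfl⟩).symm)

lemma upperMinkDim_le_of_log_coverCount_le {d C : ℝ}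
    (h : ∀ᶠ ε in 𝓝[>] 0,
      0 ≤ log (coverCount s ε) ∧ log (coverCount s ε) ≤ d * log (1 / ε) + C) :
    upperMinkDim s ≤ d := by
  have hL : Tendsto (fun ε : ℝ => log (1 / ε)) (𝓝[>] 0) atTop := by
    simpa only [one_div, Function.comp_def] using
      tendsto_log_atTop.comp (tendsto_inv_nhdsGT_zero (𝕜 := ℝ))
  have hbound : Tendsto (fun ε => d + C / log (1 / ε)) (𝓝[>] 0) (𝓝 d) := by
    simpa using tendsto_const_nhds.add (tendsto_const_nhds.div_atTop hL)
  have hLpos : ∀ᶠ ε in 𝓝[>] 0, 0 < log (1 / ε) := hL.eventually_gt_atTop 0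
  unfold upperMinkDim
  rw [← hbound.limsup_eq]
  refine limsup_le_limsup ?_ ?_ hbound.isBoundedUnder_le
  · filter_upwards [h, hLpos] with ε ⟨_, hε⟩ hLε
    rw [div_le_iff₀ hLε, add_mul, div_mul_cancel₀ _ hLε.ne']
    linarith
  · refine IsCoboundedUnder.of_frequently_ge (a := 0) (Eventually.frequently ?_)
    filter_upwards [h, hLpos] with ε ⟨hε, _⟩ hLε
    positivity

end CoverCount

lemma inv_pow_floor_add_one_lt {b ε : ℝ} (hb : 1 < b) (hε : 0 < ε) :
    (b ^ (⌊log (1 / ε) / log b⌋₊ + 1))⁻¹ < ε := by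
  have hlog : log (1 / ε) < log (b ^ (⌊log (1 / ε) / log b⌋₊ + 1)) := by
    rw [Real.log_pow, ← div_lt_iff₀ (log_pos hb)]
    exact_mod_cast Nat.lt_floor_add_one _
  rw [inv_lt_comm₀ (by positivity) hε, ← one_div]
  exact (log_lt_log_iff (by positivity) (by positivity)).mp hlog

section BedfordMcMullen

variable {m l k : ℕ} {D : ℕ → Finset (Fin m × Fin l)}

lemma BMset_eq_range (m l : ℕ) (D : ℕ → Finset (Fin m × Fin l)) :
    BMset m l D = Set.range (fun ω : {ω : ℕ → Fin m × Fin l // ∀ n, ω n ∈ D n} =>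
      (ofDigits (fun n => (ω.1 n).1), ofDigits (fun n => (ω.1 n).2))) := by
  ext p
  simp only [BMset, Set.mem_ofPred_eq, Set.mem_range, Subtype.exists, Prod.ext_iff, ofDigits,
    ofDigitsTerm, div_eq_mul_inv]
  exact exists_congr fun ω => by tauto

lemma BMset_nonempty (hl : 0 < l) (hk : 1 ≤ k) (hD : UniformFibers k D) :
    (BMset m l D).Nonempty := by
  have hDne : ∀ n, (D n).Nonempty := fun n =>
    (Finset.card_pos.mp (by rw [hD n ⟨0, hl⟩]; exact hk)).mono (Finset.filter_subset _ _)
  rw [BMset_eq_range]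
  exact Set.range_nonempty_iff_nonempty.mpr
    ⟨⟨fun n => (hDne n).choose, fun n => (hDne n).choose_spec⟩⟩

lemma exists_finset_cover_BMset (hD : UniformFibers k D) {n p : ℕ} (hnp : n ≤ p) {ε : ℝ}
    (hm : ((m : ℝ) ^ n)⁻¹ < ε) (hl : ((l : ℝ) ^ p)⁻¹ < ε) :
    ∃ t : Finset (ℝ × ℝ), t.card ≤ k ^ n * l ^ p ∧
      BMset m l D ⊆ ⋃ x ∈ t, ball x ε := by
  let T : Finset (Σ _ : Fin p → Fin l, Fin n → Fin m × Fin l) :=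
    Finset.univ.sigma fun τ =>
      Fintype.piFinset fun j => (D j).filter (·.2 = τ (Fin.castLE hnp j))
  have hT : T.card = k ^ n * l ^ p := by
    simp only [T, Finset.card_sigma, Fintype.card_piFinset, hD _ _]
    simp [mul_comm]
  obtain ⟨t, ht, hcov⟩ := exists_finset_cover_range (ε := ε)
    (fun ω : {ω : ℕ → Fin m × Fin l // ∀ n, ω n ∈ D n} =>
      (ofDigits (fun n => (ω.1 n).1), ofDigits (fun n => (ω.1 n).2)))
    (fun ω => ⟨fun j => (ω.1 j).2, fun j => ω.1 j⟩) T
    (fun ω => by simp [T, ω.2])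
    (fun ω ω' h => by
      rw [Prod.dist_eq, max_lt_iff, Real.dist_eq, Real.dist_eq]
      constructor
      · refine (abs_ofDigits_sub_ofDigits_le fun i hi => ?_).trans_lt hm
        exact congrArg (fun x => (x.2 ⟨i, hi⟩).1) h
      · refine (abs_ofDigits_sub_ofDigits_le fun i hi => ?_).trans_lt hl
        exact congrArg (fun x => x.1 ⟨i, hi⟩) h)
  exact ⟨t, hT ▸ ht, (BMset_eq_range m l D).symm ▸ hcov⟩

lemma log_coverCount_BMset_le (hl : 1 < l) (hlm : l ≤ m) (hk : 1 ≤ k) (hD : UniformFibers k D)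
    {ε : ℝ} (hε : ε ∈ Set.Ioo 0 1) :
    0 ≤ log (coverCount (BMset m l D) ε) ∧
      log (coverCount (BMset m l D) ε) ≤
        (1 + log k / log m) * log (1 / ε) + (log k + log l) := by
  have hl' : (1 : ℝ) < l := by exact_mod_cast hl
  have hlm' : (l : ℝ) ≤ m := by exact_mod_cast hlm
  have hlogl := log_pos hl'
  have hlogm := log_pos (hl'.trans_le hlm')
  set L := log (1 / ε)
  have hL : 0 ≤ L := log_nonneg (one_le_one_div hε.1 hε.2.le)
  set n := ⌊L / log m⌋₊ + 1
  set p := ⌊L / log l⌋₊ + 1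
  have hnp : n ≤ p := Nat.add_le_add_right
    (Nat.floor_le_floor (div_le_div_of_nonneg_left hL hlogl (log_le_log (by positivity) hlm'))) 1
  obtain ⟨t, ht, hcov⟩ := exists_finset_cover_BMset hD hnp
    (inv_pow_floor_add_one_lt (hl'.trans_le hlm') hε.1) (inv_pow_floor_add_one_lt hl' hε.1)
  have hcount := one_le_coverCount (BMset_nonempty (by omega) hk hD) hcov
  refine ⟨log_nonneg hcount, ?_⟩
  have hn : (n : ℝ) ≤ L / log m + 1 := by
    push_cast [n]; gcongr; exact Nat.floor_le (by positivity)
  have hp : (p : ℝ) ≤ L / log l + 1 := by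
    push_cast [p]; gcongr; exact Nat.floor_le (by positivity)
  calc log (coverCount (BMset m l D) ε)
      ≤ log ((k : ℝ) ^ n * (l : ℝ) ^ p) :=
        log_le_log (by linarith) ((coverCount_le_card hcov).trans (by exact_mod_cast ht))
    _ = n * log k + p * log l := by
        rw [log_mul (by positivity) (by positivity), log_pow, log_pow]
    _ ≤ (L / log m + 1) * log k + (L / log l + 1) * log l := by
        gcongr
    _ = (1 + log k / log m) * L + (log k + log l) := by
        field_simp
        ring

end BedfordMcMullen

theorem stmt12_general (m l k : ℕ) (hl : 1 < l) (hlm : l < m) (hk : 1 ≤ k)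
    (D : ℕ → Finset (Fin m × Fin l)) (hD : UniformFibers k D) :
    upperMinkDim (BMset m l D) ≤ 1 + Real.log k / Real.log m :=
  upperMinkDim_le_of_log_coverCount_le (C := log k + log l) <|
    eventually_of_mem (Ioo_mem_nhdsGT one_pos) fun _ hε =>
      log_coverCount_BMset_le hl hlm.le hk hD hε

/-- A Bedford-McMullen set with uniform fibers has upper Minkowski dimension at most
`1 + log k / log m`. -/
theorem stmt12 (m l k : ℕ) (hl : 1 < l) (hlm : l < m) (hk : 1 ≤ k) (hkm : k < m)
    (D : ℕ → Finset (Fin m × Fin l)) (hD : UniformFibers k D) :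
    upperMinkDim (BMset m l D) ≤ 1 + Real.log k / Real.log m :=
  stmt12_general m l k hl hlm hk D hD
end

section
/- Let 1 < ℓ < m, 1 ≤ k < m, d = log k / log m, and μ the uniform measure on a Bedford-McMullen set K with uniform fibers (mass (kℓ)^{-n} per generation-n rectangle). Then there exists C > 0 such that μ(B(x,r)) ≤ C·r^{1+d} for every x ∈ K and r > 0. -/
/-!
Fix scales `n ≤ N` with `m⁻ⁿ ≈ r ≈ l⁻ᴺ`. Up to a `μ`-null set, the ball `B(x, r)` is covered by
the generation-`N` rectangles coded by prefixes of codings of its points. Such a rectangle lies in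
an approximate square, determined by its first `n` column digits and its `N` row digits. Read as
base-`m` (resp. base-`l`) integers, the column prefix and the row word of a rectangle meeting the
ball take only `O(m)` (resp. `O(l)`) values, and by uniform fibers each approximate square contains
at most `k^(N-n)` admissible rectangles. Hence
`μ(B(x, r)) ≲ k^(N-n) (kl)⁻ᴺ = k⁻ⁿ l⁻ᴺ ≤ r^d · r`, using `k⁻ⁿ = (m⁻ⁿ)^d`.
-/

open MeasureTheory ENNReal

/-- The generation-`n` rectangle determined by the word `w` of digits. -/
noncomputable def cylRect (m l : ℕ) (n : ℕ) (w : Fin n → Fin m × Fin l) : Set (ℝ × ℝ) :=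
  Set.Icc (∑ i : Fin n, ((w i).1 : ℝ) / m ^ (i.1 + 1))
      ((∑ i : Fin n, ((w i).1 : ℝ) / m ^ (i.1 + 1)) + 1 / m ^ n) ×ˢ
    Set.Icc (∑ i : Fin n, ((w i).2 : ℝ) / l ^ (i.1 + 1))
      ((∑ i : Fin n, ((w i).2 : ℝ) / l ^ (i.1 + 1)) + 1 / l ^ n)

section DigitExpansion

variable {b : ℕ} {a : ℕ → ℕ}

theorem digit_div_pow_le_sub (ha : ∀ i, a i < b) (i : ℕ) :
    (a i : ℝ) / (b : ℝ) ^ (i + 1) ≤ 1 / (b : ℝ) ^ i - 1 / (b : ℝ) ^ (i + 1) := by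
  have hab : (a i : ℝ) ≤ b - 1 := by
    have : (a i : ℝ) + 1 ≤ b := by exact_mod_cast ha i
    linarith
  have hb0 : (b : ℝ) ≠ 0 := by
    have : 0 < b := (Nat.zero_le _).trans_lt (ha 0)
    positivity
  calc (a i : ℝ) / (b : ℝ) ^ (i + 1) ≤ (b - 1) / (b : ℝ) ^ (i + 1) := by gcongr
    _ = 1 / (b : ℝ) ^ i - 1 / (b : ℝ) ^ (i + 1) := by field_simp; ring

theorem sum_range_digit_tail_le (ha : ∀ i, a i < b) (N M : ℕ) :
    ∑ i ∈ Finset.range M, (a (i + N) : ℝ) / (b : ℝ) ^ (i + N + 1) ≤ 1 / (b : ℝ) ^ N := by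
  calc ∑ i ∈ Finset.range M, (a (i + N) : ℝ) / (b : ℝ) ^ (i + N + 1)
      ≤ ∑ i ∈ Finset.range M, (1 / (b : ℝ) ^ (i + N) - 1 / (b : ℝ) ^ (i + 1 + N)) := by
        gcongr with i
        rw [add_right_comm i 1]
        exact digit_div_pow_le_sub ha (i + N)
    _ = 1 / (b : ℝ) ^ N - 1 / (b : ℝ) ^ (M + N) := by
        rw [Finset.sum_range_sub' (fun i => 1 / (b : ℝ) ^ (i + N)), zero_add]
    _ ≤ 1 / (b : ℝ) ^ N := by
        have : (0 : ℝ) ≤ 1 / (b : ℝ) ^ (M + N) := by positivity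
        linarith

theorem summable_digit (ha : ∀ i, a i < b) :
    Summable fun i => (a i : ℝ) / (b : ℝ) ^ (i + 1) :=
  summable_of_sum_range_le (c := 1) (fun _ => by positivity)
    (fun M => by simpa using sum_range_digit_tail_le ha 0 M)

theorem tsum_digit_mem_Icc (ha : ∀ i, a i < b) (N : ℕ) :
    ∑' i, (a i : ℝ) / (b : ℝ) ^ (i + 1) ∈
      Set.Icc (∑ i : Fin N, (a i : ℝ) / (b : ℝ) ^ (i.1 + 1))
        (∑ i : Fin N, (a i : ℝ) / (b : ℝ) ^ (i.1 + 1) + 1 / (b : ℝ) ^ N) := by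
  rw [Fin.sum_univ_eq_sum_range (fun i => (a i : ℝ) / (b : ℝ) ^ (i + 1)),
    ← (summable_digit ha).sum_add_tsum_nat_add N]
  have htail_le : ∑' i, (a (i + N) : ℝ) / (b : ℝ) ^ (i + N + 1) ≤ 1 / (b : ℝ) ^ N :=
    Real.tsum_le_of_sum_range_le (fun _ => by positivity) (sum_range_digit_tail_le ha N)
  have htail_nonneg : 0 ≤ ∑' i, (a (i + N) : ℝ) / (b : ℝ) ^ (i + N + 1) :=
    tsum_nonneg fun _ => by positivity
  constructor <;> linarith

end DigitExpansion

theorem coding_mem_cylRect {m l : ℕ} (ω : ℕ → Fin m × Fin l) (N : ℕ) :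
    ((∑' n, ((ω n).1 : ℝ) / m ^ (n + 1), ∑' n, ((ω n).2 : ℝ) / l ^ (n + 1)) : ℝ × ℝ) ∈
      cylRect m l N (fun i => ω i) :=
  Set.mk_mem_prod (tsum_digit_mem_Icc (fun n => (ω n).1.2) N)
    (tsum_digit_mem_Icc (fun n => (ω n).2.2) N)

-- `c 0` is the most significant digit, matching the expansion `∑ i, c i / b ^ (i + 1)`.
def wordVal {b n : ℕ} (c : Fin n → Fin b) : ℕ := finFunctionFinEquiv (c ∘ Fin.rev)

theorem wordVal_injective (b n : ℕ) : Function.Injective (wordVal (b := b) (n := n)) := by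
  intro c c' h
  have hrev := finFunctionFinEquiv.injective (Fin.val_injective h)
  funext i
  simpa using congrFun hrev (Fin.rev i)

theorem sum_digit_div_pow_eq_wordVal {b n : ℕ} (hb : 0 < b) (c : Fin n → Fin b) :
    ∑ i : Fin n, (c i : ℝ) / (b : ℝ) ^ (i.1 + 1) = (wordVal c : ℝ) / (b : ℝ) ^ n := by
  rw [wordVal, finFunctionFinEquiv_apply]
  push_cast
  rw [Finset.sum_div]
  refine Fintype.sum_equiv Fin.revPerm _ _ fun i => ?_
  simp only [Fin.revPerm_apply, Function.comp_apply, Fin.rev_rev, Fin.val_rev]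
  have hpow : (b : ℝ) ^ n = (b : ℝ) ^ (n - (i.1 + 1)) * (b : ℝ) ^ (i.1 + 1) := by
    rw [← pow_add]; congr 1; omega
  rw [hpow, mul_comm ((b : ℝ) ^ (n - (i.1 + 1))), mul_div_mul_right _ _ (by positivity)]

theorem Int.card_le_of_forall_mem_Icc {s : Finset ℤ} {a b : ℝ} (hab : a ≤ b)
    (hs : ∀ z ∈ s, (z : ℝ) ∈ Set.Icc a b) : (s.card : ℝ) ≤ b - a + 1 := by
  have hsub : s ⊆ Finset.Icc ⌈a⌉ ⌊b⌋ := fun z hz => by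
    obtain ⟨haz, hzb⟩ := hs z hz
    exact Finset.mem_Icc.2 ⟨Int.ceil_le.2 haz, Int.le_floor.2 hzb⟩
  have hlen : ((⌊b⌋ + 1 - ⌈a⌉ : ℤ) : ℝ) ≤ b - a + 1 := by
    push_cast
    linarith [Int.floor_le b, Int.le_ceil a]
  have hlen_nonneg : 0 ≤ ⌊b⌋ + 1 - ⌈a⌉ := by
    have := (Int.ceil_le_floor_add_one a).trans (by gcongr : ⌊a⌋ + 1 ≤ ⌊b⌋ + 1)
    omega
  calc (s.card : ℝ) ≤ (Finset.Icc ⌈a⌉ ⌊b⌋).card := by exact_mod_cast Finset.card_le_card hsub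
    _ = ((⌊b⌋ + 1 - ⌈a⌉ : ℤ) : ℝ) := by
        rw [Int.card_Icc, ← Int.cast_natCast, Int.toNat_of_nonneg hlen_nonneg]
    _ ≤ b - a + 1 := hlen

theorem card_le_of_forall_digitInterval_near {b n : ℕ} (hb : 0 < b) {x r : ℝ} (hr : 0 < r)
    (A : Finset (Fin n → Fin b))
    (hA : ∀ c ∈ A, ∃ t, |t - x| < r ∧ t ∈ Set.Icc (∑ i : Fin n, (c i : ℝ) / (b : ℝ) ^ (i.1 + 1))
      (∑ i : Fin n, (c i : ℝ) / (b : ℝ) ^ (i.1 + 1) + 1 / (b : ℝ) ^ n)) :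
    (A.card : ℝ) ≤ 2 * r * (b : ℝ) ^ n + 2 := by
  have hbn : (0 : ℝ) < (b : ℝ) ^ n := by positivity
  have hval : ∀ c ∈ A, ((wordVal c : ℤ) : ℝ) ∈
      Set.Icc ((b : ℝ) ^ n * (x - r) - 1) ((b : ℝ) ^ n * (x + r)) := by
    intro c hc
    obtain ⟨t, htx, ht⟩ := hA c hc
    rw [sum_digit_div_pow_eq_wordVal hb, Set.mem_Icc, ← add_div, div_le_iff₀ hbn,
      le_div_iff₀ hbn] at ht
    rw [abs_sub_lt_iff] at htx
    push_cast
    constructor <;> nlinarith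
  have hcard : (A.image fun c => (wordVal c : ℤ)).card = A.card :=
    Finset.card_image_of_injective _ (Nat.cast_injective.comp (wordVal_injective b n))
  calc (A.card : ℝ) = (A.image fun c => (wordVal c : ℤ)).card := by rw [hcard]
    _ ≤ (b : ℝ) ^ n * (x + r) - ((b : ℝ) ^ n * (x - r) - 1) + 1 :=
        Int.card_le_of_forall_mem_Icc (by nlinarith) (by simpa using hval)
    _ = 2 * r * (b : ℝ) ^ n + 2 := by ring

-- The Bedford–McMullen approximate square of side `≈ l⁻ᴺ` containing the rectangle of `w`.
def approxSquare {m l n N : ℕ} (hnN : n ≤ N) (w : Fin N → Fin m × Fin l) :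
    (Fin n → Fin m) × (Fin N → Fin l) :=
  (fun j => (w (Fin.castLE hnN j)).1, fun i => (w i).2)

theorem Fin.prod_ite_val_lt_one_eq_pow (k n N : ℕ) (hnN : n ≤ N) :
    ∏ i : Fin N, (if (i : ℕ) < n then 1 else k) = k ^ (N - n) := by
  rw [Fin.prod_univ_eq_prod_range (fun i => if i < n then 1 else k),
    ← Finset.prod_range_mul_prod_Ico _ hnN,
    Finset.prod_congr rfl fun i hi => if_pos (Finset.mem_range.1 hi),
    Finset.prod_congr rfl fun i hi => if_neg (Finset.mem_Ico.1 hi).1.not_gt]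
  simp

theorem card_admissible_approxSquare_le {m l k n N : ℕ} {D : ℕ → Finset (Fin m × Fin l)}
    (hD : UniformFibers k D) (hnN : n ≤ N) (Q : (Fin n → Fin m) × (Fin N → Fin l)) :
    (Finset.univ.filter fun w : Fin N → Fin m × Fin l =>
      (∀ i : Fin N, w i ∈ D i) ∧ approxSquare hnN w = Q).card ≤ k ^ (N - n) := by
  classical
  let G : Fin N → Finset (Fin m × Fin l) := fun i =>
    if h : (i : ℕ) < n then {(Q.1 ⟨i, h⟩, Q.2 i)} else (D i).filter fun q => q.2 = Q.2 i
  have hsub : (Finset.univ.filter fun w : Fin N → Fin m × Fin l =>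
      (∀ i : Fin N, w i ∈ D i) ∧ approxSquare hnN w = Q) ⊆ Fintype.piFinset G := by
    intro w hw
    obtain ⟨hwD, rfl⟩ := (Finset.mem_filter.1 hw).2
    refine Fintype.mem_piFinset.2 fun i => ?_
    by_cases hi : (i : ℕ) < n
    · simp [G, hi, approxSquare]
    · simp only [G, hi, dif_neg, not_false_eq_true, approxSquare]
      exact Finset.mem_filter.2 ⟨hwD i, rfl⟩
  have hcard : ∀ i, (G i).card = if (i : ℕ) < n then 1 else k := by
    intro i
    by_cases hi : (i : ℕ) < n
    · simp [G, hi]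
    · simp [G, hi, hD i (Q.2 i)]
  calc _ ≤ (Fintype.piFinset G).card := Finset.card_le_card hsub
    _ = k ^ (N - n) := by
      rw [Fintype.card_piFinset, Finset.prod_congr rfl fun i _ => hcard i,
        Fin.prod_ite_val_lt_one_eq_pow k n N hnN]

open Classical in
noncomputable def codingPrefixes (m l : ℕ) (D : ℕ → Finset (Fin m × Fin l)) (s : Set (ℝ × ℝ))
    (N : ℕ) : Finset (Fin N → Fin m × Fin l) :=
  Finset.univ.filter fun w => ∃ ω : ℕ → Fin m × Fin l, (∀ n, ω n ∈ D n) ∧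
    (∀ i : Fin N, w i = ω i) ∧
    ((∑' n, ((ω n).1 : ℝ) / m ^ (n + 1), ∑' n, ((ω n).2 : ℝ) / l ^ (n + 1)) : ℝ × ℝ) ∈ s

theorem admissible_of_mem_codingPrefixes {m l N : ℕ} {D : ℕ → Finset (Fin m × Fin l)}
    {s : Set (ℝ × ℝ)} {w : Fin N → Fin m × Fin l} (hw : w ∈ codingPrefixes m l D s N) :
    ∀ i : Fin N, w i ∈ D i := by
  classical
  obtain ⟨ω, hωD, hwω, -⟩ := (Finset.mem_filter.1 hw).2
  exact fun i => hwω i ▸ hωD i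

theorem measure_le_card_codingPrefixes_mul {m l k : ℕ} {D : ℕ → Finset (Fin m × Fin l)}
    {μ : Measure (ℝ × ℝ)} (hsupp : μ (BMset m l D)ᶜ = 0)
    (hrect : ∀ (n : ℕ) (w : Fin n → Fin m × Fin l), (∀ i : Fin n, w i ∈ D i.1) →
      μ (BMset m l D ∩ cylRect m l n w) = (((k : ℝ≥0∞) * l)⁻¹) ^ n)
    (s : Set (ℝ × ℝ)) (N : ℕ) :
    μ s ≤ (codingPrefixes m l D s N).card * (((k : ℝ≥0∞) * l)⁻¹) ^ N := by
  classical
  set S := codingPrefixes m l D s N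
  have hcover : s ⊆ (⋃ w ∈ S, BMset m l D ∩ cylRect m l N w) ∪ (BMset m l D)ᶜ := by
    rintro p hp
    by_cases hpK : p ∈ BMset m l D
    · obtain ⟨ω, hωD, hp1, hp2⟩ := hpK
      have hpω : p = (_, _) := Prod.ext hp1 hp2
      have hwS : (fun i : Fin N => ω i) ∈ S :=
        Finset.mem_filter.2 ⟨Finset.mem_univ _, ω, hωD, fun _ => rfl, hpω ▸ hp⟩
      refine Or.inl (Set.mem_biUnion hwS ⟨⟨ω, hωD, hp1, hp2⟩, ?_⟩)
      rw [hpω]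
      exact coding_mem_cylRect ω N
    · exact Or.inr hpK
  calc μ s ≤ μ (⋃ w ∈ S, BMset m l D ∩ cylRect m l N w) + μ (BMset m l D)ᶜ :=
        (measure_mono hcover).trans (measure_union_le _ _)
    _ ≤ ∑ w ∈ S, μ (BMset m l D ∩ cylRect m l N w) := by
        rw [hsupp, add_zero]
        exact measure_biUnion_finset_le _ _
    _ = S.card * (((k : ℝ≥0∞) * l)⁻¹) ^ N := by
        rw [Finset.sum_congr rfl fun w hw => hrect N w (admissible_of_mem_codingPrefixes hw),
          Finset.sum_const, nsmul_eq_mul]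

theorem card_codingPrefixes_ball_le {m l k n N : ℕ} (hm : 0 < m) (hl : 0 < l)
    {D : ℕ → Finset (Fin m × Fin l)} (hD : UniformFibers k D) (hnN : n ≤ N)
    (x : ℝ × ℝ) {r : ℝ} (hr : 0 < r) :
    ((codingPrefixes m l D (Metric.ball x r) N).card : ℝ) ≤
      k ^ (N - n) * ((2 * r * (m : ℝ) ^ n + 2) * (2 * r * (l : ℝ) ^ N + 2)) := by
  classical
  set S := codingPrefixes m l D (Metric.ball x r) N
  have hcoding : ∀ w ∈ S, ∃ ω : ℕ → Fin m × Fin l, (∀ i : Fin N, w i = ω i) ∧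
      |∑' n, ((ω n).1 : ℝ) / m ^ (n + 1) - x.1| < r ∧
      |∑' n, ((ω n).2 : ℝ) / l ^ (n + 1) - x.2| < r := by
    intro w hw
    obtain ⟨ω, -, hwω, hball⟩ := (Finset.mem_filter.1 hw).2
    rw [Metric.mem_ball, Prod.dist_eq, max_lt_iff, Real.dist_eq, Real.dist_eq] at hball
    exact ⟨ω, hwω, hball⟩
  have hfiber : ∀ Q ∈ S.image (approxSquare hnN),
      (S.filter fun w => approxSquare hnN w = Q).card ≤ k ^ (N - n) := by
    intro Q _
    refine (Finset.card_le_card fun w hw => ?_).trans (card_admissible_approxSquare_le hD hnN Q)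
    obtain ⟨hwS, hwQ⟩ := Finset.mem_filter.1 hw
    exact Finset.mem_filter.2 ⟨Finset.mem_univ w, admissible_of_mem_codingPrefixes hwS, hwQ⟩
  have hcols : ((S.image fun w => (approxSquare hnN w).1).card : ℝ) ≤ 2 * r * (m : ℝ) ^ n + 2 := by
    refine card_le_of_forall_digitInterval_near (x := x.1) hm hr _ fun c hc => ?_
    obtain ⟨w, hwS, rfl⟩ := Finset.mem_image.1 hc
    obtain ⟨ω, hwω, hcol, -⟩ := hcoding w hwS
    refine ⟨_, hcol, ?_⟩
    simp only [approxSquare, hwω, Fin.val_castLE]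
    exact tsum_digit_mem_Icc (fun n => (ω n).1.2) n
  have hrows : ((S.image fun w => (approxSquare hnN w).2).card : ℝ) ≤ 2 * r * (l : ℝ) ^ N + 2 := by
    refine card_le_of_forall_digitInterval_near (x := x.2) hl hr _ fun c hc => ?_
    obtain ⟨w, hwS, rfl⟩ := Finset.mem_image.1 hc
    obtain ⟨ω, hwω, -, hrow⟩ := hcoding w hwS
    refine ⟨_, hrow, ?_⟩
    simp only [approxSquare, hwω]
    exact tsum_digit_mem_Icc (fun n => (ω n).2.2) N
  have hsquares : (S.image (approxSquare hnN)).card ≤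
      (S.image fun w => (approxSquare hnN w).1).card *
        (S.image fun w => (approxSquare hnN w).2).card := by
    rw [← Finset.card_product]
    refine Finset.card_le_card fun Q hQ => ?_
    obtain ⟨w, hwS, rfl⟩ := Finset.mem_image.1 hQ
    exact Finset.mem_product.2 ⟨Finset.mem_image_of_mem _ hwS, Finset.mem_image_of_mem _ hwS⟩
  calc (S.card : ℝ) ≤ k ^ (N - n) * (S.image (approxSquare hnN)).card := by
        exact_mod_cast Finset.card_le_mul_card_image S _ hfiber
    _ ≤ k ^ (N - n) * ((S.image fun w => (approxSquare hnN w).1).card *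
          (S.image fun w => (approxSquare hnN w).2).card) := by
        gcongr
        exact_mod_cast hsquares
    _ ≤ k ^ (N - n) * ((2 * r * (m : ℝ) ^ n + 2) * (2 * r * (l : ℝ) ^ N + 2)) := by
        gcongr

theorem mul_pow_le_of_minimal {b : ℕ} (hb : 1 ≤ b) {r : ℝ}
    (hr1 : r ≤ 1) {n : ℕ} (hmin : ∀ j < n, ¬ 1 ≤ r * (b : ℝ) ^ j) : r * (b : ℝ) ^ n ≤ b := by
  have hb' : (1 : ℝ) ≤ b := by exact_mod_cast hb
  rcases n with _ | n
  · simpa using hr1.trans hb'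
  · have := not_le.1 (hmin n n.lt_succ_self)
    rw [pow_succ, ← mul_assoc]
    nlinarith

theorem exists_scales {m l : ℕ} (hl : 1 < l) (hlm : l ≤ m) {r : ℝ} (hr0 : 0 < r) (hr1 : r ≤ 1) :
    ∃ n N : ℕ, n ≤ N ∧ 1 ≤ r * (m : ℝ) ^ n ∧ r * (m : ℝ) ^ n ≤ m ∧
      1 ≤ r * (l : ℝ) ^ N ∧ r * (l : ℝ) ^ N ≤ l := by
  have hlR : (1 : ℝ) < l := by exact_mod_cast hl
  have hlmR : (l : ℝ) ≤ m := by exact_mod_cast hlm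
  have hexl : ∃ N, 1 ≤ r * (l : ℝ) ^ N := by
    obtain ⟨N, hN⟩ := pow_unbounded_of_one_lt r⁻¹ hlR
    exact ⟨N, by rw [inv_lt_iff_one_lt_mul₀ hr0, mul_comm] at hN; exact hN.le⟩
  classical
  set N := Nat.find hexl
  have hN : 1 ≤ r * (l : ℝ) ^ N := Nat.find_spec hexl
  have hexm : ∃ n, 1 ≤ r * (m : ℝ) ^ n :=
    ⟨N, hN.trans (by gcongr)⟩
  refine ⟨Nat.find hexm, N, Nat.find_min' hexm (hN.trans (by gcongr)), Nat.find_spec hexm,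
    mul_pow_le_of_minimal (hl.le.trans hlm) hr1 fun j => Nat.find_min hexm,
    hN, mul_pow_le_of_minimal hl.le hr1 fun j => Nat.find_min hexl⟩

theorem inv_pow_le_rpow_log_div_log {m k n : ℕ} (hm : 1 < m) (hk : 0 < k) {r : ℝ}
    (h : 1 ≤ r * (m : ℝ) ^ n) : ((k : ℝ) ^ n)⁻¹ ≤ r ^ (Real.log k / Real.log m) := by
  have hmR : (1 : ℝ) < m := by exact_mod_cast hm
  have hkR : (1 : ℝ) ≤ k := by exact_mod_cast hk
  have hd : 0 ≤ Real.log k / Real.log m :=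
    div_nonneg (Real.log_nonneg hkR) (Real.log_nonneg hmR.le)
  have hmn : ((m : ℝ) ^ n)⁻¹ ≤ r := by
    rw [inv_le_iff_one_le_mul₀ (by positivity)]
    linarith
  calc ((k : ℝ) ^ n)⁻¹ = (((m : ℝ) ^ n)⁻¹) ^ (Real.log k / Real.log m) := by
        rw [Real.log_div_log, Real.inv_rpow (by positivity), ← Real.rpow_pow_comm (by positivity),
          Real.rpow_logb (by positivity) hmR.ne' (by positivity)]
    _ ≤ r ^ (Real.log k / Real.log m) := Real.rpow_le_rpow (by positivity) hmn hd

theorem scale_estimate {m l k n N : ℕ} (hm : 1 < m) (hl : 0 < l) (hk : 0 < k) (hnN : n ≤ N) {r : ℝ}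
    (hr : 0 < r) (hn₁ : 1 ≤ r * (m : ℝ) ^ n) (hn₂ : r * (m : ℝ) ^ n ≤ m)
    (hN₁ : 1 ≤ r * (l : ℝ) ^ N) (hN₂ : r * (l : ℝ) ^ N ≤ l) :
    k ^ (N - n) * ((2 * r * (m : ℝ) ^ n + 2) * (2 * r * (l : ℝ) ^ N + 2)) *
        (((k : ℝ) * l)⁻¹) ^ N ≤
      (2 * m + 2) * (2 * l + 2) * r ^ (1 + Real.log k / Real.log m) := by
  have hlN : ((l : ℝ) ^ N)⁻¹ ≤ r := by
    rw [inv_le_iff_one_le_mul₀ (by positivity)]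
    linarith
  have hmass : (k : ℝ) ^ (N - n) * (((k : ℝ) * l)⁻¹) ^ N = ((k : ℝ) ^ n)⁻¹ * ((l : ℝ) ^ N)⁻¹ := by
    rw [mul_inv, mul_pow, ← mul_assoc, inv_pow, inv_pow, ← div_eq_mul_inv,
      div_eq_iff (by positivity), ← pow_sub_mul_pow _ hnN]
    field_simp
  calc k ^ (N - n) * ((2 * r * (m : ℝ) ^ n + 2) * (2 * r * (l : ℝ) ^ N + 2)) *
        (((k : ℝ) * l)⁻¹) ^ N
      = ((2 * r * (m : ℝ) ^ n + 2) * (2 * r * (l : ℝ) ^ N + 2)) *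
          (((k : ℝ) ^ n)⁻¹ * ((l : ℝ) ^ N)⁻¹) := by rw [← hmass]; ring
    _ ≤ (2 * m + 2) * (2 * l + 2) * (r ^ (Real.log k / Real.log m) * r) := by
        have hm' : 2 * r * (m : ℝ) ^ n + 2 ≤ 2 * m + 2 := by linarith
        have hl' : 2 * r * (l : ℝ) ^ N + 2 ≤ 2 * l + 2 := by linarith
        have hk' := inv_pow_le_rpow_log_div_log hm hk hn₁
        gcongr
    _ = (2 * m + 2) * (2 * l + 2) * r ^ (1 + Real.log k / Real.log m) := by
        rw [Real.rpow_add hr, Real.rpow_one, mul_comm r]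

theorem stmt14_general (m l k : ℕ) (hl : 1 < l) (hlm : l < m) (hk : 1 ≤ k)
    (D : ℕ → Finset (Fin m × Fin l)) (hD : UniformFibers k D)
    (μ : Measure (ℝ × ℝ)) (hprob : IsProbabilityMeasure μ)
    (hsupp : μ (BMset m l D)ᶜ = 0)
    (hrect : ∀ (n : ℕ) (w : Fin n → Fin m × Fin l), (∀ i : Fin n, w i ∈ D i.1) →
      μ (BMset m l D ∩ cylRect m l n w) = (((k : ℝ≥0∞) * l)⁻¹) ^ n) :
    ∃ C > (0 : ℝ), ∀ x ∈ BMset m l D, ∀ r > (0 : ℝ),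
      μ (Metric.ball x r) ≤
        ENNReal.ofReal (C * r ^ (1 + Real.log k / Real.log m)) := by
  have hm : 1 < m := hl.trans hlm
  refine ⟨(2 * m + 2) * (2 * l + 2), by positivity, fun x _ r hr => ?_⟩
  rcases le_or_gt 1 r with hr1 | hr1
  · have hd : 0 ≤ 1 + Real.log k / Real.log m := add_nonneg zero_le_one <| div_nonneg
      (Real.log_nonneg (by exact_mod_cast hk)) (Real.log_nonneg (by exact_mod_cast hm.le))
    refine prob_le_one.trans (ENNReal.one_le_ofReal.2 ?_)
    exact one_le_mul_of_one_le_of_one_le (by nlinarith) (Real.one_le_rpow hr1 hd)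
  obtain ⟨n, N, hnN, hn₁, hn₂, hN₁, hN₂⟩ := exists_scales hl hlm.le hr hr1.le
  set S := codingPrefixes m l D (Metric.ball x r) N
  calc μ (Metric.ball x r) ≤ S.card * (((k : ℝ≥0∞) * l)⁻¹) ^ N :=
        measure_le_card_codingPrefixes_mul hsupp hrect _ N
    _ = ENNReal.ofReal (S.card * (((k : ℝ) * l)⁻¹) ^ N) := by
        rw [ENNReal.ofReal_mul (by positivity), ENNReal.ofReal_natCast,
          ENNReal.ofReal_pow (by positivity), ENNReal.ofReal_inv_of_pos (by positivity),
          ENNReal.ofReal_mul (by positivity), ENNReal.ofReal_natCast, ENNReal.ofReal_natCast]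
    _ ≤ _ := ENNReal.ofReal_le_ofReal <|
        (mul_le_mul_of_nonneg_right (card_codingPrefixes_ball_le (by omega) (by omega) hD hnN x hr)
          (by positivity)).trans (scale_estimate hm (by omega) (by omega) hnN hr hn₁ hn₂ hN₁ hN₂)

/-- The uniform measure `μ` on a Bedford-McMullen set with uniform fibers satisfies the
upper mass bound `μ(B(x,r)) ≤ C r^{1+d}` with `d = log k / log m`. -/
theorem stmt14 (m l k : ℕ) (hl : 1 < l) (hlm : l < m) (hk : 1 ≤ k) (hkm : k < m)
    (D : ℕ → Finset (Fin m × Fin l)) (hD : UniformFibers k D)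
    (μ : Measure (ℝ × ℝ)) (hprob : IsProbabilityMeasure μ)
    (hsupp : μ (BMset m l D)ᶜ = 0)
    (hrect : ∀ (n : ℕ) (w : Fin n → Fin m × Fin l), (∀ i : Fin n, w i ∈ D i.1) →
      μ (BMset m l D ∩ cylRect m l n w) = (((k : ℝ≥0∞) * l)⁻¹) ^ n) :
    ∃ C > (0 : ℝ), ∀ x ∈ BMset m l D, ∀ r > (0 : ℝ),
      μ (Metric.ball x r) ≤
        ENNReal.ofReal (C * r ^ (1 + Real.log k / Real.log m)) :=
  stmt14_general m l k hl hlm hk D hD μ hprob hsupp hrect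
end

section
/- Let W be a standard linear Brownian motion, α ∈ (2/3, 2], and for t₀ ≥ 0 and a > 0 let T_{±a}(t₀) = inf{t − t₀ : t > t₀, |W(t) − W(t₀)| = a}. Then almost surely the Hausdorff dimension of {t ∈ [0,1] : limsup_{a→0⁺} T_{±a}(t)/a^α > 1} is at most 3/2 − 1/α. -/
open MeasureTheory

/-- `W` is a standard linear Brownian motion under `P`: it starts at `0`, has almost surely
continuous paths, has independent increments, and its increments are centered Gaussian with
variance equal to the time increment. -/
def IsStandardBM {Ω : Type*} [MeasurableSpace Ω] (P : Measure Ω) (W : ℝ → Ω → ℝ) : Prop :=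
  (∀ ω, W 0 ω = 0) ∧
  (∀ᵐ ω ∂P, Continuous fun t => W t ω) ∧
  (∀ t, Measurable (W t)) ∧
  (∀ s t : ℝ, 0 ≤ s → s ≤ t →
    Measure.map (fun ω => W t ω - W s ω) P =
      ProbabilityTheory.gaussianReal 0 (Real.toNNReal (t - s))) ∧
  (∀ (n : ℕ) (τ : Fin (n + 1) → ℝ), Monotone τ → (∀ i, 0 ≤ τ i) →
    ProbabilityTheory.iIndepFun (m := fun _ : Fin n => (inferInstance : MeasurableSpace ℝ))
      (fun i ω => W (τ i.succ) ω - W (τ i.castSucc) ω) P)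

/-- The exit time `T_{±a}(t₀)` of the band of half-width `a` around `W(t₀)`, after time `t₀`. -/
noncomputable def exitTime {Ω : Type*} (W : ℝ → Ω → ℝ) (ω : Ω) (t₀ a : ℝ) : ℝ :=
  sInf { s : ℝ | 0 < s ∧ |W (t₀ + s) ω - W t₀ ω| = a }

/-!
For `α < 2` the slow set is almost surely empty (for `α = 2` the bound is `1 = dim ℝ`). If `t`
is slow, then for infinitely many `n` there is `a ∈ (2^-(n+1), 2^-n]` such that `W` stays within
`a` of `W t` for a time `a^α ≥ 2^(-(n+1)α)`. Hence one of the `≈ 4^(n+2)` intervals of length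
`δₙ = 2^(-(n+1)α) / 2` of a grid covering `[0,1]` carries an oscillation of at most `2^(1-n)`.
Cutting such an interval into `k = 3n + 4` pieces, independence of increments and the bound on
the Gaussian density give it probability at most `2^-k`, because the variance `δₙ / k` of a
piece dominates the squared width: `δₙ / 4^-n` grows geometrically as `α < 2`. So the grid
event at level `n` has probability at most `2^-n`, and Borel–Cantelli concludes.
-/

open MeasureTheory ProbabilityTheory Filter Set Asymptotics
open scoped NNReal ENNReal Topology Real

lemma gaussianPDFReal_le_inv_sqrt (μ : ℝ) (v : ℝ≥0) (x : ℝ) :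
    gaussianPDFReal μ v x ≤ (√(2 * π * v))⁻¹ := by
  rw [gaussianPDFReal_def]
  refine mul_le_of_le_one_right (by positivity) (Real.exp_le_one_iff.2 ?_)
  exact div_nonpos_of_nonpos_of_nonneg (neg_nonpos.2 (sq_nonneg _)) (by positivity)

lemma gaussianReal_Icc_le (μ : ℝ) {v : ℝ≥0} (hv : v ≠ 0) (a b : ℝ) :
    gaussianReal μ v (Icc a b) ≤ ENNReal.ofReal ((b - a) / √(2 * π * v)) := by
  rw [gaussianReal_of_var_ne_zero μ hv, withDensity_apply _ measurableSet_Icc]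
  calc ∫⁻ x in Icc a b, gaussianPDF μ v x
      ≤ ∫⁻ _ in Icc a b, ENNReal.ofReal (√(2 * π * v))⁻¹ :=
        setLIntegral_mono measurable_const fun x _ =>
          ENNReal.ofReal_le_ofReal (gaussianPDFReal_le_inv_sqrt μ v x)
    _ = ENNReal.ofReal ((b - a) / √(2 * π * v)) := by
        rw [setLIntegral_const, Real.volume_Icc, ← ENNReal.ofReal_mul (by positivity),
          div_eq_inv_mul]

lemma ae_eventually_notMem_of_eventually_le_pow {X : Type*} [MeasurableSpace X]
    {μ : Measure X} {s : ℕ → Set X} {r : ℝ≥0∞} (hr : r < 1)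
    (h : ∀ᶠ n in atTop, μ (s n) ≤ r ^ n) :
    ∀ᵐ x ∂μ, ∀ᶠ n in atTop, x ∉ s n := by
  obtain ⟨N, hN⟩ := eventually_atTop.1 h
  have hsum : ∑' n, μ (s (n + N)) ≠ ∞ := by
    refine ne_top_of_le_ne_top ?_ (ENNReal.tsum_le_tsum fun n => (hN _ (Nat.le_add_left N n)).trans
      (pow_le_pow_right_of_le_one' hr.le (Nat.le_add_right n N)))
    rw [ENNReal.tsum_geometric]
    exact ENNReal.inv_ne_top.2 (tsub_pos_of_lt hr).ne'
  filter_upwards [ae_eventually_notMem hsum] with x hx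
  filter_upwards [(tendsto_sub_atTop_nat N).eventually hx, eventually_ge_atTop N] with n hn hNn
  rwa [Nat.sub_add_cancel hNn] at hn

section BandEvents

variable {Ω : Type*}

def bandEvent (W : ℝ → Ω → ℝ) (g L ε : ℝ) : Set Ω :=
  {ω | ∀ s ∈ Icc 0 L, |W (g + s) ω - W g ω| ≤ ε}

def gridEvent (W : ℝ → Ω → ℝ) (δ ε : ℝ) : Set Ω :=
  ⋃ j ∈ Finset.range (⌈δ⁻¹⌉₊ + 1), bandEvent W (j * δ) δ ε

lemma abs_sub_le_of_mem_bandEvent {W : ℝ → Ω → ℝ} {g L ε : ℝ} {ω : Ω}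
    (hω : ω ∈ bandEvent W g L ε) (hL : 0 ≤ L) {k j : ℕ} (hj : j ≤ k) :
    |W (g + j * (L / k)) ω - W g ω| ≤ ε := by
  refine hω _ ⟨by positivity, ?_⟩
  rw [mul_div_left_comm]
  exact mul_le_of_le_one_right hL (div_le_one_of_le₀ (Nat.cast_le.2 hj) k.cast_nonneg)

variable [MeasurableSpace Ω] {P : Measure Ω} {W : ℝ → Ω → ℝ}

lemma IsStandardBM.measure_bandEvent_le (hW : IsStandardBM P W) {g L : ℝ} (hg : 0 ≤ g)
    (hL : 0 < L) (ε : ℝ) (k : ℕ) :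
    P (bandEvent W g L ε) ≤ ENNReal.ofReal (4 * ε / √(2 * π * (L / k))) ^ k := by
  set τ : Fin (k + 1) → ℝ := fun j => g + (j : ℕ) * (L / k)
  have hτ_mono : Monotone τ := fun i j hij => by
    simp only [τ]
    gcongr
    exact Fin.le_iff_val_le_val.1 hij
  have hτ_nonneg : ∀ i, 0 ≤ τ i := fun i => by positivity
  set Δ : Fin k → Ω → ℝ := fun i ω => W (τ i.succ) ω - W (τ i.castSucc) ω
  set I := Icc (-(2 * ε)) (2 * ε)
  set q := ENNReal.ofReal (4 * ε / √(2 * π * (L / k)))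
  have hsub : bandEvent W g L ε ⊆ ⋂ i ∈ (Finset.univ : Finset (Fin k)), Δ i ⁻¹' I := by
    intro ω hω
    simp only [mem_iInter, mem_preimage, Finset.mem_univ, forall_true_left]
    intro i
    rw [mem_Icc, ← abs_le]
    have h₁ : |W (τ i.succ) ω - W g ω| ≤ ε :=
      abs_sub_le_of_mem_bandEvent hω hL.le i.succ.is_le
    have h₂ : |W (τ i.castSucc) ω - W g ω| ≤ ε :=
      abs_sub_le_of_mem_bandEvent hω hL.le i.castSucc.is_le
    calc |Δ i ω| = |(W (τ i.succ) ω - W g ω) - (W (τ i.castSucc) ω - W g ω)| := by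
          rw [sub_sub_sub_cancel_right]
      _ ≤ 2 * ε := (abs_sub _ _).trans (by linarith)
  have hfactor : ∀ i : Fin k, P (Δ i ⁻¹' I) ≤ q := by
    intro i
    have hk : (0 : ℝ) < k := Nat.cast_pos.2 i.pos
    have hgap : τ i.succ - τ i.castSucc = L / k := by
      simp only [τ, Fin.val_succ, Fin.val_castSucc]
      push_cast
      ring
    have hlaw : P.map (Δ i) = gaussianReal 0 (L / k).toNNReal :=
      hgap ▸ hW.2.2.2.1 _ _ (hτ_nonneg i.castSucc) (hτ_mono (Fin.castSucc_le_succ i))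
    have hΔ : Measurable (Δ i) := (hW.2.2.1 _).sub (hW.2.2.1 _)
    rw [← Measure.map_apply hΔ measurableSet_Icc, hlaw]
    refine (gaussianReal_Icc_le 0 (by simp [Real.toNNReal_eq_zero]; positivity) _ _).trans_eq ?_
    rw [Real.coe_toNNReal _ (by positivity)]
    simp only [q]
    ring_nf
  calc P (bandEvent W g L ε) ≤ P (⋂ i ∈ (Finset.univ : Finset (Fin k)), Δ i ⁻¹' I) :=
        measure_mono hsub
    _ = ∏ i : Fin k, P (Δ i ⁻¹' I) :=
        (hW.2.2.2.2 k τ hτ_mono hτ_nonneg).measure_inter_preimage_eq_mul _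
          fun _ _ => measurableSet_Icc
    _ ≤ ∏ _i : Fin k, q := Finset.prod_le_prod' fun i _ => hfactor i
    _ = q ^ k := by simp

lemma IsStandardBM.measure_bandEvent_le_inv_two_pow (hW : IsStandardBM P W) {g L ε : ℝ}
    (hg : 0 ≤ g) (hL : 0 < L) {k : ℕ} (hk : 64 * k * ε ^ 2 ≤ L) :
    P (bandEvent W g L ε) ≤ 2⁻¹ ^ k := by
  refine (hW.measure_bandEvent_le hg hL ε k).trans (pow_le_pow_left' ?_ k)
  rcases k.eq_zero_or_pos with rfl | hk0
  · simp
  have hsq : (8 * ε) ^ 2 ≤ 2 * π * (L / k) := by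
    rw [mul_div_assoc', le_div_iff₀ (Nat.cast_pos.2 hk0)]
    nlinarith [Real.pi_gt_three, sq_nonneg ε]
  have hpos : 0 < √(2 * π * (L / k)) := Real.sqrt_pos.2 (by positivity)
  rw [← ENNReal.ofReal_ofNat 2, ← ENNReal.ofReal_inv_of_pos two_pos]
  refine ENNReal.ofReal_le_ofReal ((div_le_iff₀ hpos).2 ?_)
  linarith [le_abs_self (8 * ε), Real.abs_le_sqrt hsq]

lemma IsStandardBM.measure_gridEvent_le (hW : IsStandardBM P W) {δ ε : ℝ} (hδ : 0 < δ)
    {k : ℕ} (hk : 64 * k * ε ^ 2 ≤ δ) :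
    P (gridEvent W δ ε) ≤ (⌈δ⁻¹⌉₊ + 1 : ℕ) * 2⁻¹ ^ k :=
  calc P (gridEvent W δ ε) ≤ ∑ j ∈ Finset.range (⌈δ⁻¹⌉₊ + 1), P (bandEvent W (j * δ) δ ε) :=
        measure_biUnion_finset_le _ _
    _ ≤ (Finset.range (⌈δ⁻¹⌉₊ + 1)).card • (2⁻¹ : ℝ≥0∞) ^ k :=
        Finset.sum_le_card_nsmul _ _ _ fun j _ =>
          hW.measure_bandEvent_le_inv_two_pow (by positivity) hδ hk
    _ = _ := by rw [Finset.card_range, nsmul_eq_mul]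

end BandEvents

noncomputable def dyadicScale (n : ℕ) : ℝ := 2⁻¹ ^ (n + 1)

lemma dyadicScale_pos (n : ℕ) : 0 < dyadicScale n := by
  unfold dyadicScale
  positivity

lemma dyadicScale_rpow_eq (α : ℝ) (n : ℕ) :
    dyadicScale n ^ α = dyadicScale n ^ 2 * ((2⁻¹ : ℝ) ^ (α - 2)) ^ (n + 1) := by
  rw [Real.rpow_pow_comm (by norm_num), ← dyadicScale, ← Real.rpow_two,
    ← Real.rpow_add (dyadicScale_pos n), add_sub_cancel]

lemma eventually_linear_mul_sq_le_dyadicScale_rpow {α : ℝ} (hα : α < 2) (A B : ℝ) :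
    ∀ᶠ n : ℕ in atTop, (A * n + B) * dyadicScale n ^ 2 ≤ dyadicScale n ^ α := by
  set r : ℝ := (2⁻¹ : ℝ) ^ (α - 2)
  have hr : 1 < r :=
    Real.one_lt_rpow_of_pos_of_lt_one_of_neg (by norm_num) (by norm_num) (by linarith)
  have hconst : (fun _ : ℕ => B) =o[atTop] fun n => r ^ n :=
    isLittleO_const_left.2 <| Or.inr <|
      tendsto_norm_atTop_atTop.comp (tendsto_pow_atTop_atTop_of_one_lt hr)
  have hlin : (fun n : ℕ => A * n + B) =o[atTop] fun n => r ^ n :=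
    ((isLittleO_coe_const_pow_of_one_lt hr).const_mul_left A).add hconst
  filter_upwards [hlin.bound one_pos] with n hn
  rw [dyadicScale_rpow_eq, mul_comm]
  gcongr
  calc A * n + B ≤ ‖A * n + B‖ := Real.le_norm_self _
    _ ≤ r ^ n := by simpa [abs_of_pos (zero_lt_one.trans hr)] using hn
    _ ≤ r ^ (n + 1) := pow_le_pow_right₀ hr.le n.le_succ

lemma natCeil_inv_dyadicScale_rpow_add_one_le {α : ℝ} (hα : α ≤ 2) (n : ℕ) :
    ⌈(dyadicScale n ^ α / 2)⁻¹⌉₊ + 1 ≤ 4 ^ (n + 2) := by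
  have hsq : dyadicScale n ^ 2 ≤ dyadicScale n ^ α := by
    rw [← Real.rpow_two]
    exact Real.rpow_le_rpow_of_exponent_ge (dyadicScale_pos n)
      (pow_le_one₀ (by norm_num) (by norm_num)) hα
  have hunit : (4 : ℝ) ^ (n + 1) * dyadicScale n ^ 2 = 1 := by
    rw [dyadicScale, ← pow_mul, mul_comm (n + 1), pow_mul, ← mul_pow]
    norm_num
  have hinv : (dyadicScale n ^ α / 2)⁻¹ ≤ 2 * 4 ^ (n + 1) := by
    rw [inv_div, div_le_iff₀ (by positivity [dyadicScale_pos n])]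
    calc (2 : ℝ) = 2 * 4 ^ (n + 1) * dyadicScale n ^ 2 := by linear_combination -2 * hunit
      _ ≤ 2 * 4 ^ (n + 1) * dyadicScale n ^ α := by gcongr
  have hceil := Nat.ceil_lt_add_one
    (inv_nonneg.2 (div_nonneg (Real.rpow_nonneg (dyadicScale_pos n).le α) zero_le_two))
  have h4 : (1 : ℝ) ≤ 4 ^ (n + 1) := one_le_pow₀ (by norm_num)
  suffices ((⌈(dyadicScale n ^ α / 2)⁻¹⌉₊ + 1 : ℕ) : ℝ) ≤ 4 ^ (n + 2) by exact_mod_cast this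
  push_cast
  rw [pow_succ _ (n + 1)]
  linarith

lemma IsStandardBM.eventually_measure_gridEvent_le {Ω : Type*} [MeasurableSpace Ω]
    {P : Measure Ω} {W : ℝ → Ω → ℝ} (hW : IsStandardBM P W) {α : ℝ} (hα : α < 2) :
    ∀ᶠ n in atTop,
      P (gridEvent W (dyadicScale n ^ α / 2) (4 * dyadicScale n)) ≤ 2⁻¹ ^ n := by
  -- `6144 n + 8192 = 2048 (3 n + 4)`: the grid intervals are cut into `3 n + 4` pieces,
  -- which makes `4 ^ (n + 2) * 2⁻¹ ^ (3 n + 4) = 2⁻¹ ^ n`.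
  filter_upwards [eventually_linear_mul_sq_le_dyadicScale_rpow hα 6144 8192] with n hn
  have hk : 64 * ((3 * n + 4 : ℕ) : ℝ) * (4 * dyadicScale n) ^ 2 ≤ dyadicScale n ^ α / 2 := by
    push_cast
    linarith
  calc P (gridEvent W (dyadicScale n ^ α / 2) (4 * dyadicScale n))
      ≤ (⌈(dyadicScale n ^ α / 2)⁻¹⌉₊ + 1 : ℕ) * 2⁻¹ ^ (3 * n + 4) :=
        hW.measure_gridEvent_le (by positivity [dyadicScale_pos n]) hk
    _ ≤ (4 ^ (n + 2) : ℕ) * 2⁻¹ ^ (3 * n + 4) := by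
        gcongr
        exact natCeil_inv_dyadicScale_rpow_add_one_le hα.le n
    _ = 2⁻¹ ^ n := by
        rw [show 3 * n + 4 = 2 * (n + 2) + n by ring, pow_add (2⁻¹ : ℝ≥0∞), pow_mul,
          ← mul_assoc, Nat.cast_pow, Nat.cast_ofNat, ← mul_pow, ← ENNReal.inv_pow,
          show (2 : ℝ≥0∞) ^ 2 = 4 by norm_num, ENNReal.mul_inv_cancel (by norm_num) (by norm_num),
          one_pow, one_mul]

section SlowPoints

variable {Ω : Type*} {W : ℝ → Ω → ℝ} {ω : Ω}

lemma abs_sub_le_of_lt_exitTime (hcont : Continuous fun u => W u ω) {t a h : ℝ} (ha : 0 < a)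
    (hh : h < exitTime W ω t a) : ∀ s ∈ Icc 0 h, |W (t + s) ω - W t ω| ≤ a := by
  intro s hs
  by_contra! has
  set F : ℝ → ℝ := fun s => |W (t + s) ω - W t ω|
  have hF : Continuous F := by fun_prop
  obtain ⟨s₁, hs₁, hF₁⟩ := intermediate_value_Icc hs.1 hF.continuousOn
    ⟨by simpa [F] using ha.le, has.le⟩
  have hs₁_pos : 0 < s₁ := hs₁.1.lt_of_ne (by rintro rfl; simp [F] at hF₁; linarith)
  have hexit : exitTime W ω t a ≤ s₁ := csInf_le ⟨0, fun x hx => hx.1.le⟩ ⟨hs₁_pos, hF₁⟩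
  linarith [hs₁.2, hs.2]

lemma frequently_lt_exitTime_of_one_lt_limsup {t α : ℝ}
    (hslow : 1 < limsup (fun a => exitTime W ω t a / a ^ α) (𝓝[>] 0)) :
    ∃ᶠ a in 𝓝[>] 0, 0 < a ∧ a ^ α < exitTime W ω t a := by
  have hcobdd : IsCoboundedUnder (· ≤ ·) (𝓝[>] 0) fun a => exitTime W ω t a / a ^ α :=
    isCoboundedUnder_le_of_eventually_le _ (eventually_mem_nhdsWithin.mono fun a ha =>
      div_nonneg (Real.sInf_nonneg fun _ hx => hx.1.le) (Real.rpow_nonneg (le_of_lt ha) α))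
  refine ((frequently_lt_of_lt_limsup hcobdd hslow).and_eventually
    eventually_mem_nhdsWithin).mono ?_
  rintro a ⟨hlt, ha⟩
  exact ⟨ha, (one_lt_div (Real.rpow_pos_of_pos ha α)).1 hlt⟩

lemma mem_gridEvent_of_forall_abs_sub_le {t δ h a ε : ℝ} (ht : t ∈ Icc (0 : ℝ) 1)
    (hδ : 0 < δ) (hδh : 2 * δ ≤ h) (hε : 2 * a ≤ ε)
    (hband : ∀ s ∈ Icc 0 h, |W (t + s) ω - W t ω| ≤ a) :
    ω ∈ gridEvent W δ ε := by
  set j := ⌈t / δ⌉₊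
  have hj_ge : t ≤ j * δ := (div_le_iff₀ hδ).1 (Nat.le_ceil _)
  have hj_lt : j * δ < t + δ := by
    have := Nat.ceil_lt_add_one (div_nonneg ht.1 hδ.le)
    rwa [← lt_div_iff₀ hδ, add_div, div_self hδ.ne']
  have hjt : ∀ s ∈ Icc 0 δ, |W (j * δ + s) ω - W t ω| ≤ a := fun s hs => by
    simpa using hband (j * δ + s - t) ⟨by linarith [hs.1], by linarith [hs.2]⟩
  simp only [gridEvent, mem_iUnion, Finset.mem_range]
  refine ⟨j, Nat.lt_succ_of_le (Nat.ceil_mono ?_), fun s hs => ?_⟩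
  · rw [← one_div]
    exact div_le_div_of_nonneg_right ht.2 hδ.le
  · have h₀ := hjt 0 ⟨le_rfl, hδ.le⟩
    rw [add_zero] at h₀
    calc |W (j * δ + s) ω - W (j * δ) ω|
        ≤ |W (j * δ + s) ω - W t ω| + |W t ω - W (j * δ) ω| := abs_sub_le _ _ _
      _ ≤ ε := by rw [abs_sub_comm (W t ω)]; linarith [hjt s hs]

lemma frequently_mem_gridEvent (hcont : Continuous fun u => W u ω) {α t : ℝ} (hα : 0 < α)
    (ht : t ∈ Icc (0 : ℝ) 1)
    (hslow : 1 < limsup (fun a => exitTime W ω t a / a ^ α) (𝓝[>] 0)) :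
    ∃ᶠ n in atTop, ω ∈ gridEvent W (dyadicScale n ^ α / 2) (4 * dyadicScale n) := by
  refine frequently_atTop.2 fun N => ?_
  obtain ⟨a, ⟨ha, hexit⟩, haN⟩ :=
    ((frequently_lt_exitTime_of_one_lt_limsup hslow).and_eventually
      (Ioo_mem_nhdsGT (show (0 : ℝ) < 2⁻¹ ^ N by positivity))).exists
  obtain ⟨n, hna, han⟩ := exists_nat_pow_near_of_lt_one ha
    (haN.2.le.trans (pow_le_one₀ (by norm_num) (by norm_num))) (by norm_num : (0 : ℝ) < 2⁻¹)
    (by norm_num)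
  have hNn : N ≤ n := Nat.lt_succ_iff.1
    ((pow_lt_pow_iff_right_of_lt_one₀ (by norm_num) (by norm_num)).1 (hna.trans haN.2))
  have hband := abs_sub_le_of_lt_exitTime hcont ha
    ((Real.rpow_le_rpow (dyadicScale_pos n).le hna.le hα.le).trans_lt hexit)
  refine ⟨n, hNn, mem_gridEvent_of_forall_abs_sub_le ht (by positivity [dyadicScale_pos n])
    (by linarith) ?_ hband⟩
  rw [dyadicScale, pow_succ]
  linarith

end SlowPoints

theorem stmt15_general {Ω : Type*} [MeasurableSpace Ω] (P : Measure Ω)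
    (W : ℝ → Ω → ℝ) (hW : IsStandardBM P W) (α : ℝ) (hα1 : 2 / 3 < α) (hα2 : α ≤ 2) :
    ∀ᵐ ω ∂P,
      dimH { t : ℝ | t ∈ Set.Icc (0 : ℝ) 1 ∧
          1 < Filter.limsup (fun a : ℝ => exitTime W ω t a / a ^ α)
              (nhdsWithin 0 (Set.Ioi 0)) } ≤
        ENNReal.ofReal (3 / 2 - 1 / α) := by
  rcases hα2.eq_or_lt with rfl | hα2
  · refine ae_of_all _ fun ω => ?_
    norm_num
    exact (dimH_mono (subset_univ _)).trans_eq Real.dimH_univ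
  filter_upwards [hW.2.1, ae_eventually_notMem_of_eventually_le_pow ENNReal.one_half_lt_one
    (hW.eventually_measure_gridEvent_le hα2)] with ω hcont hrare
  have hempty : {t : ℝ | t ∈ Icc (0 : ℝ) 1 ∧
      1 < limsup (fun a : ℝ => exitTime W ω t a / a ^ α) (𝓝[>] 0)} = ∅ :=
    eq_empty_iff_forall_notMem.2 fun t ⟨ht, hslow⟩ =>
      frequently_mem_gridEvent hcont (by linarith) ht hslow hrare
  rw [hempty, dimH_empty]
  exact zero_le

/-- Almost surely, the set of `t ∈ [0,1]` with `limsup_{a→0⁺} T_{±a}(t)/a^α > 1` has Hausdorff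
dimension at most `3/2 - 1/α`, for `2/3 < α ≤ 2`. -/
theorem stmt15 {Ω : Type*} [MeasurableSpace Ω] (P : Measure Ω) [IsProbabilityMeasure P]
    (W : ℝ → Ω → ℝ) (hW : IsStandardBM P W) (α : ℝ) (hα1 : 2 / 3 < α) (hα2 : α ≤ 2) :
    ∀ᵐ ω ∂P,
      dimH { t : ℝ | t ∈ Set.Icc (0 : ℝ) 1 ∧
          1 < Filter.limsup (fun a : ℝ => exitTime W ω t a / a ^ α)
              (nhdsWithin 0 (Set.Ioi 0)) } ≤
        ENNReal.ofReal (3 / 2 - 1 / α) :=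
  stmt15_general P W hW α hα1 hα2
end
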